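/- arXiv:2101.03789 — 4 statements merged into one kernel-verified Lean document; each statement's English description precedes it below -/
import Mathlib

section
/- Let r ≥ 2 be an integer and m_1, …, m_r positive integers with s = m_1 + ⋯ + m_r. Then the multinomial coefficient s!/(m_1!⋯m_r!) equals the sum, over all ordered bipartitions (B_1, B_2) of {1, …, r} with 1 ∈ B_1, 2 ∈ B_2 and B_2 = {1,…,r} \ B_1, of the product binom(s − r + 2, S(B_2) − |B_2| + 1) · C(B_1) · C(B_2). -/
/-!
Multiplying by `∏ mᵢ! = m₁ · ∏ gᵢ!` and writing `B₁ = {1} ∪ D`, `B₂ = {2} ∪ C` with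
`C ⊔ D = M = {3, …, r}`, `aᵢ = mᵢ - 1`, `x = m₂`, `y = m₁`, the summand of `B₁` becomes
`N! · (x + a(C) + 1)^(|C|) · y (y + a(D) + 1)^(|D| - 1)` (the last factor read as `1` when
`D = ∅`), where `N = s - r + 2` and `t^(k)` is the rising factorial, while
`s! = N! · (x + y + a(M) + 1)^(|M|)`. What remains is the rising-factorial form of the
Abel–Hurwitz identity, proved by induction on `M` and `y`: at `y = 0` only `C = M` survives, and
`y ↦ y + 1` peels one element `i` off the Abel factor; the induction hypothesis for `M \ {i}` then
reduces the step to Pascal's rule `(n + 1)^(k) = n^(k) + k (n + 1)^(k - 1)`.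
-/

open Finset Nat

namespace Nat

theorem ascFactorial_add_one_eq_mul (n k : ℕ) :
    n.ascFactorial (k + 1) = n * (n + 1).ascFactorial k :=
  ascFactorial_succ.trans (succ_ascFactorial n k).symm

theorem add_one_ascFactorial (n k : ℕ) :
    (n + 1).ascFactorial k = n.ascFactorial k + k * (n + 1).ascFactorial (k - 1) := by
  cases k with
  | zero => simp
  | succ k => rw [ascFactorial_add_one_eq_mul n, ascFactorial_succ, Nat.add_sub_cancel]; ring

end Nat

section Hurwitz

variable {α : Type*} [DecidableEq α] (a : α → ℕ)

/-- Rising-factorial analogue of Abel's `y (y + a(E))^(|E| - 1)`. -/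
def abelAscFactorial (y : ℕ) (E : Finset α) : ℕ :=
  if E = ∅ then 1 else y * (y + ∑ i ∈ E, a i + 1).ascFactorial (#E - 1)

@[simp] lemma abelAscFactorial_empty (y : ℕ) : abelAscFactorial a y ∅ = 1 := if_pos rfl

lemma abelAscFactorial_zero {E : Finset α} (hE : E ≠ ∅) : abelAscFactorial a 0 E = 0 := by
  simp [abelAscFactorial, hE]

lemma abelAscFactorial_of_card_eq {y k : ℕ} {E : Finset α} (hE : #E = k + 1) :
    abelAscFactorial a y E = y * (y + ∑ i ∈ E, a i + 1).ascFactorial k := by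
  rw [abelAscFactorial, if_neg (by rintro rfl; simp at hE), hE, Nat.add_sub_cancel]

lemma abelAscFactorial_add_one (y : ℕ) (E : Finset α) :
    abelAscFactorial a (y + 1) E =
      abelAscFactorial a y E + ∑ i ∈ E, abelAscFactorial a (y + 1 + a i) (E.erase i) := by
  match hE : #E with
  | 0 => simp_all
  | 1 =>
    obtain ⟨i, rfl⟩ := card_eq_one.1 hE
    simp [abelAscFactorial_of_card_eq a hE]
  | k + 2 =>
    have herase : ∀ i ∈ E, abelAscFactorial a (y + 1 + a i) (E.erase i) =
        (y + 1 + a i) * (y + ∑ i ∈ E, a i + 2).ascFactorial k := by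
      intro i hi
      rw [abelAscFactorial_of_card_eq a (by rw [card_erase_of_mem hi, hE]; rfl)]
      have := add_sum_erase E a hi
      congr 2
      omega
    have hsum : ∑ i ∈ E, (y + 1 + a i) = (k + 2) * (y + 1) + ∑ i ∈ E, a i := by
      rw [sum_add_distrib, sum_const, hE, smul_eq_mul]
    rw [sum_congr rfl herase, ← sum_mul, hsum, abelAscFactorial_of_card_eq a hE,
      abelAscFactorial_of_card_eq a hE, ascFactorial_succ, ascFactorial_add_one_eq_mul]
    ring_nf

theorem sum_powerset_ascFactorial_mul_abelAscFactorial (M : Finset α) (x y : ℕ) :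
    ∑ C ∈ M.powerset, (x + ∑ i ∈ C, a i + 1).ascFactorial #C * abelAscFactorial a y (M \ C) =
      (x + y + ∑ i ∈ M, a i + 1).ascFactorial #M := by
  induction M using Finset.strongInduction generalizing y with
  | _ M ih =>
  induction y with
  | zero =>
    rw [sum_eq_single_of_mem M (mem_powerset_self M), sdiff_self, bot_eq_empty,
      abelAscFactorial_empty, mul_one, add_zero]
    intro C hC hCM
    rw [abelAscFactorial_zero a (sdiff_eq_empty_iff_subset.not.2 fun h =>
      hCM ((mem_powerset.1 hC).antisymm h)), mul_zero]
  | succ y ihy =>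
    have hswap : ∑ C ∈ M.powerset, ∑ i ∈ M \ C,
          (x + ∑ j ∈ C, a j + 1).ascFactorial #C *
            abelAscFactorial a (y + 1 + a i) ((M \ C).erase i) =
        ∑ i ∈ M, ∑ C ∈ (M.erase i).powerset,
          (x + ∑ j ∈ C, a j + 1).ascFactorial #C *
            abelAscFactorial a (y + 1 + a i) (M.erase i \ C) := by
      refine sum_comm' (fun C i => ?_) |>.trans (sum_congr rfl fun i _ => sum_congr rfl
        fun C _ => by rw [erase_sdiff_comm])
      simp only [mem_powerset, mem_sdiff, subset_erase]
      tauto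
    have hinner : ∀ i ∈ M, ∑ C ∈ (M.erase i).powerset,
          (x + ∑ j ∈ C, a j + 1).ascFactorial #C *
            abelAscFactorial a (y + 1 + a i) (M.erase i \ C) =
        (x + y + ∑ j ∈ M, a j + 1 + 1).ascFactorial (#M - 1) := by
      intro i hi
      rw [ih _ (erase_ssubset hi), card_erase_of_mem hi, ← add_sum_erase M a hi]
      ring_nf
    simp only [abelAscFactorial_add_one, mul_add, mul_sum, sum_add_distrib]
    rw [ihy, hswap, sum_congr rfl hinner, sum_const, smul_eq_mul,
      show x + (y + 1) + ∑ i ∈ M, a i + 1 = x + y + ∑ i ∈ M, a i + 1 + 1 by ring,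
      add_one_ascFactorial (x + y + ∑ i ∈ M, a i + 1) #M]

lemma mul_factorial_eq_factorial_mul_abelAscFactorial {y : ℕ} (hy : y ≠ 0) (E : Finset α) :
    y * (y - 1 + ∑ i ∈ E, a i + #E)! = (y + ∑ i ∈ E, a i)! * abelAscFactorial a y E := by
  match hE : #E with
  | 0 => simp [card_eq_zero.1 hE, mul_factorial_pred hy]
  | k + 1 =>
    rw [abelAscFactorial_of_card_eq a hE, show y - 1 + ∑ i ∈ E, a i + (k + 1) =
      y + ∑ i ∈ E, a i + k by omega, ← factorial_mul_ascFactorial]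
    ring

theorem factorial_eq_sum_powerset_choose_mul (M : Finset α) (x : ℕ) {y : ℕ} (hy : y ≠ 0) :
    (x + y + ∑ i ∈ M, a i + #M)! =
      ∑ C ∈ M.powerset, (x + y + ∑ i ∈ M, a i).choose (x + ∑ i ∈ C, a i) *
        (y * (y - 1 + ∑ i ∈ M \ C, a i + #(M \ C))!) * (x + ∑ i ∈ C, a i + #C)! := by
  rw [← factorial_mul_ascFactorial (x + y + ∑ i ∈ M, a i),
    ← sum_powerset_ascFactorial_mul_abelAscFactorial, mul_sum]
  refine sum_congr rfl fun C hC => ?_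
  rw [mul_factorial_eq_factorial_mul_abelAscFactorial a hy,
    ← factorial_mul_ascFactorial (x + ∑ i ∈ C, a i),
    ← sum_sdiff (mem_powerset.1 hC), show x + y + (∑ i ∈ M \ C, a i + ∑ i ∈ C, a i) =
      (y + ∑ i ∈ M \ C, a i) + (x + ∑ i ∈ C, a i) by ring,
    ← add_choose_mul_factorial_mul_factorial]
  ring

end Hurwitz

namespace Finset

lemma sum_eq_sum_sub_one_add_card {α : Type*} {D : Finset α} {m : α → ℕ}
    (hm : ∀ i ∈ D, 0 < m i) :
    ∑ i ∈ D, m i = ∑ i ∈ D, (m i - 1) + #D := by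
  rw [card_eq_sum_ones, ← sum_add_distrib]
  exact sum_congr rfl fun i hi => (Nat.sub_add_cancel (hm i hi)).symm

variable {α : Type*} [DecidableEq α] {I : Finset α} {p q : α}

lemma sum_filter_powerset_mem_notMem {β : Type*} [AddCommMonoid β] (hp : p ∈ I) (hpq : p ≠ q)
    (f : Finset α → β) :
    ∑ B ∈ I.powerset.filter (fun B => p ∈ B ∧ q ∉ B), f B =
      ∑ C ∈ ((I.erase p).erase q).powerset, f (insert p ((I.erase p).erase q \ C)) := by
  have hrecover : ∀ B ∈ I.powerset.filter (fun B => p ∈ B ∧ q ∉ B),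
      insert p ((I.erase p).erase q \ ((I.erase p).erase q \ B)) = B := by
    intro B hB
    ext i
    grind
  exact sum_nbij' (fun B => (I.erase p).erase q \ B)
    (fun C => insert p ((I.erase p).erase q \ C))
    (fun B _ => by simp) (fun C hC => by grind) hrecover (fun C hC => by ext i; grind)
    (fun B hB => by rw [hrecover B hB])

lemma sdiff_insert_sdiff_erase_erase (hq : q ∈ I) (hpq : p ≠ q) {C : Finset α}
    (hC : C ⊆ (I.erase p).erase q) :
    I \ insert p ((I.erase p).erase q \ C) = insert q C := by
  ext i
  grind

lemma prod_factorial_eq_mul_prod_factorial (hp : p ∈ I) {m g : α → ℕ} (hmp : 0 < m p)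
    (hgp : g p = m p - 1) (hg : ∀ i ∈ I, i ≠ p → g i = m i) :
    ∏ i ∈ I, (m i)! = m p * ∏ i ∈ I, (g i)! := by
  rw [← mul_prod_erase I _ hp, ← mul_prod_erase I (fun i => (g i)!) hp, hgp, ← mul_assoc,
    mul_factorial_pred hmp.ne']
  congr 1
  exact prod_congr rfl fun i hi => by rw [hg i (mem_of_mem_erase hi) (ne_of_mem_erase hi)]

lemma prod_factorial_mul_multinomial_mul_multinomial (hp : p ∈ I) {m g : α → ℕ} (hmp : 0 < m p)
    (hgp : g p = m p - 1) (hg : ∀ i ∈ I, i ≠ p → g i = m i) {B : Finset α} (hB : B ⊆ I) (c : ℕ) :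
    (∏ i ∈ I, (m i)!) * (c * multinomial B g * multinomial (I \ B) g) =
      c * (m p * (∑ i ∈ B, g i)!) * (∑ i ∈ I \ B, g i)! := by
  rw [prod_factorial_eq_mul_prod_factorial hp hmp hgp hg, ← prod_sdiff hB, ← multinomial_spec B g,
    ← multinomial_spec (I \ B) g]
  ring

end Finset

theorem multinomial_eq_sum_filter_powerset {α : Type*} [DecidableEq α] {I : Finset α} {p q : α}
    (hp : p ∈ I) (hq : q ∈ I) (hpq : p ≠ q) {m g : α → ℕ} (hm : ∀ i ∈ I, 0 < m i)
    (hgp : g p = m p - 1) (hg : ∀ i ∈ I, i ≠ p → g i = m i) :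
    multinomial I m = ∑ B ∈ I.powerset.filter (fun B => p ∈ B ∧ q ∉ B),
      (∑ i ∈ I, m i - #I + 2).choose (∑ i ∈ I \ B, g i - #(I \ B) + 1) *
        multinomial B g * multinomial (I \ B) g := by
  have hmp := hm p hp
  have hmq := hm q hq
  set M := (I.erase p).erase q
  have hqM : q ∉ M := notMem_erase q _
  have hpM : p ∉ insert q M := by simp [M, hpq]
  have hI : I = insert p (insert q M) := by
    rw [insert_erase (mem_erase.2 ⟨hpq.symm, hq⟩), insert_erase hp]
  have hMI : M ⊆ I := (erase_subset _ _).trans (erase_subset _ _)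
  have hmD : ∀ D ⊆ I, ∑ i ∈ D, m i = ∑ i ∈ D, (m i - 1) + #D := fun D hD =>
    sum_eq_sum_sub_one_add_card fun i hi => hm i (hD hi)
  have hgD : ∀ D ⊆ M, ∑ i ∈ D, g i = ∑ i ∈ D, m i := fun D hD =>
    sum_congr rfl fun i hi => hg i (hMI (hD hi)) (ne_of_mem_erase (mem_of_mem_erase (hD hi)))
  have hsumI : ∑ i ∈ I, m i = m q + m p + ∑ i ∈ M, (m i - 1) + #M := by
    rw [hI, sum_insert hpM, sum_insert hqM, hmD M hMI]
    ring
  have hcardI : #I = #M + 2 := by rw [hI, card_insert_of_notMem hpM, card_insert_of_notMem hqM]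
  have hN : m q + m p + ∑ i ∈ M, (m i - 1) + #M - #I + 2 = m q + m p + ∑ i ∈ M, (m i - 1) := by
    omega
  apply Nat.eq_of_mul_eq_mul_left (prod_pos fun i _ => factorial_pos (m i))
  rw [multinomial_spec, mul_sum, sum_filter_powerset_mem_notMem hp hpq, hsumI,
    factorial_eq_sum_powerset_choose_mul (fun i => m i - 1) M (m q) hmp.ne']
  refine sum_congr rfl fun C hC => ?_
  rw [mem_powerset] at hC
  set B := insert p (M \ C)
  have hBI : B ⊆ I := insert_subset hp (sdiff_subset.trans hMI)
  have hqC : q ∉ C := fun h => hqM (hC h)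
  have hsumB : ∑ i ∈ B, g i = m p - 1 + ∑ i ∈ M \ C, (m i - 1) + #(M \ C) := by
    rw [sum_insert fun h => hpM (mem_insert_of_mem (sdiff_subset h)), hgp, hgD _ sdiff_subset,
      hmD _ (sdiff_subset.trans hMI), add_assoc]
  have hsumIB : ∑ i ∈ I \ B, g i = m q + ∑ i ∈ C, (m i - 1) + #C := by
    rw [sdiff_insert_sdiff_erase_erase hq hpq hC, sum_insert hqC, hg q hq hpq.symm, hgD C hC,
      hmD C (hC.trans hMI), add_assoc]
  have hcardIB : #(I \ B) = #C + 1 := by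
    rw [sdiff_insert_sdiff_erase_erase hq hpq hC, card_insert_of_notMem hqC]
  have hk : ∑ i ∈ I \ B, g i - #(I \ B) + 1 = m q + ∑ i ∈ C, (m i - 1) := by omega
  rw [prod_factorial_mul_multinomial_mul_multinomial hp hmp hgp hg hBI, hk, hN, hsumB, hsumIB]

/-- **Second identity on multinomial coefficients.**
For `r ≥ 2` and positive integers `m 1, …, m r` with `s = m 1 + ⋯ + m r`,
setting `g 1 = m 1 - 1` and `g i = m i` for `2 ≤ i`, the multinomial coefficient
`s! / (m 1 ! ⋯ m r !)` equals the sum over all ordered bipartitions `(B₁, B₂)` of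
`{1, …, r}` with `1 ∈ B₁`, `2 ∈ B₂`, and `B₂ = {1,…,r} \ B₁` of
`choose (s - r + 2) (S(B₂) - |B₂| + 1) * C(B₁) * C(B₂)`, where `S(B) = ∑_{i∈B} g i`
and `C(B) = S(B)! / ∏_{i∈B} (g i)!`. -/
theorem multinomial_identity_two
    (r : ℕ) (hr : 2 ≤ r) (m : ℕ → ℕ) (hm : ∀ i ∈ Finset.Icc 1 r, 0 < m i)
    (s : ℕ) (hs : s = ∑ i ∈ Finset.Icc 1 r, m i)
    (g : ℕ → ℕ) (hg1 : g 1 = m 1 - 1) (hg2 : ∀ i, 2 ≤ i → g i = m i) :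
    s.factorial / ∏ i ∈ Finset.Icc 1 r, (m i).factorial =
      ∑ B1 ∈ (Finset.Icc 1 r).powerset.filter (fun B => 1 ∈ B ∧ 2 ∉ B),
        (s - r + 2).choose
            ((∑ i ∈ Finset.Icc 1 r \ B1, g i) - (Finset.Icc 1 r \ B1).card + 1) *
          ((∑ i ∈ B1, g i).factorial / ∏ i ∈ B1, (g i).factorial) *
          ((∑ i ∈ Finset.Icc 1 r \ B1, g i).factorial /
            ∏ i ∈ Finset.Icc 1 r \ B1, (g i).factorial) := by
  have h1 : 1 ∈ Icc 1 r := mem_Icc.2 ⟨le_rfl, by omega⟩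
  have h2 : 2 ∈ Icc 1 r := mem_Icc.2 ⟨by norm_num, hr⟩
  have key := multinomial_eq_sum_filter_powerset h1 h2 (by norm_num) hm hg1
    fun i hi hi1 => hg2 i (by rw [mem_Icc] at hi; omega)
  rw [Nat.card_Icc, Nat.add_sub_cancel] at key
  exact hs ▸ key
end

section
/- Let k ≥ 1 be an integer and m_1, …, m_k positive integers with s = m_1 + ⋯ + m_k. Then the number of ordered partitions (P_1, …, P_k) of {1, …, s} of type (m_1, …, m_k) whose reachable set R(P) equals the full index set {1, …, k} is exactly the multinomial coefficient (s − 1)! / ((m_1 − 1)! · m_2! ⋯ m_k!). -/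
/-- `P` is an ordered partition of `{1, …, s}` of type `(m 1, …, m r)`:
the sets `P 1, …, P r` are pairwise disjoint, their union is `{1, …, s}`,
`|P i| = m i` for each `i ∈ {1, …, r}`, and `P i = ∅` for irrelevant indices. -/
def IsOrderedPartition (r s : ℕ) (m : ℕ → ℕ) (P : ℕ → Finset ℕ) : Prop :=
  (∀ i, i ∉ Finset.Icc 1 r → P i = ∅) ∧
  (∀ i j, i ≠ j → Disjoint (P i) (P j)) ∧
  ((Finset.Icc 1 r).biUnion P = Finset.Icc 1 s) ∧
  (∀ i ∈ Finset.Icc 1 r, (P i).card = m i)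

/-- `F` is closed under the arcs `i → j` given by `j ∈ P i ∩ {2, …, r}`. -/
def ArcClosed (r : ℕ) (P : ℕ → Finset ℕ) (F : Finset ℕ) : Prop :=
  ∀ i ∈ F, ∀ j ∈ P i, 2 ≤ j → j ≤ r → j ∈ F

/-- `F` is the reachable set `R(P)`: the smallest set containing `1` that is
closed under the arcs `i → j` given by `j ∈ P i ∩ {2, …, r}`. -/
def IsReachSet (r : ℕ) (P : ℕ → Finset ℕ) (F : Finset ℕ) : Prop :=
  1 ∈ F ∧ ArcClosed r P F ∧
    ∀ F' : Finset ℕ, 1 ∈ F' → ArcClosed r P F' → F ⊆ F'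

/-!
Generalize to an index set `I` with root `ρ` and a ground set `G ⊇ I \ {ρ}`, and show that the
number `N` of reaching partitions satisfies `N · ∏_{i ∈ I} m_i! = m_ρ · (|G| - 1)!`, by strong
induction on `G`. Take `g ∈ G`. If `g` is not a non-root index, it is the target of no arc, so
deleting `g` from its block `P_i` is a bijection onto the reaching partitions of `G \ {g}` of type
`m - e_i`. Otherwise `G = I \ {ρ}`, and as `∑ m_i = |I| - 1` some non-root index `b` has
`m_b = 0`: then `b` is a leaf of the reachability graph, and deleting `b` both as an element and as
an index is again such a bijection. Either way the recursion closes because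
`∑_i m_i (m - e_i)_ρ = m_ρ (|G| - 1)`.
-/

open Finset Function
open scoped Nat

lemma Finset.biUnion_erase_of_eq_empty {ι β : Type*} [DecidableEq ι] [DecidableEq β]
    (s : Finset ι) {t : ι → Finset β} {a : ι} (ha : t a = ∅) :
    (s.erase a).biUnion t = s.biUnion t := by
  ext x
  simp only [mem_biUnion, mem_erase]
  exact ⟨fun ⟨j, ⟨_, hj⟩, hx⟩ => ⟨j, hj, hx⟩,
    fun ⟨j, hj, hx⟩ => ⟨j, ⟨by rintro rfl; simp [ha] at hx, hj⟩, hx⟩⟩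

lemma Finset.exists_eq_zero_of_sum_lt_card {ι : Type*} {s : Finset ι} {f : ι → ℕ}
    (h : ∑ i ∈ s, f i < s.card) : ∃ i ∈ s, f i = 0 := by
  obtain ⟨i, hi, hfi⟩ := exists_lt_of_sum_lt (f := f) (g := fun _ => 1) (by simpa using h)
  exact ⟨i, hi, Nat.lt_one_iff.mp hfi⟩

lemma Set.ncard_eq_sum_ncard_sep {β ι : Type*} {S : Set β} (hS : S.Finite) (J : Finset ι)
    (p : ι → β → Prop) (hcover : ∀ x ∈ S, ∃ i ∈ J, p i x)
    (hunique : ∀ x ∈ S, ∀ i j, p i x → p j x → i = j) :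
    S.ncard = ∑ i ∈ J, {x ∈ S | p i x}.ncard := by
  rw [← finsum_mem_coe_finset, ← J.finite_toSet.ncard_biUnion (fun i _ => hS.sep _)]
  · congr 1
    ext x
    simp only [Set.mem_iUnion, Set.mem_sep_iff, exists_prop]
    exact ⟨fun hx => (hcover x hx).imp fun i hi => ⟨hi.1, hx, hi.2⟩, fun ⟨_, _, hx, _⟩ => hx⟩
  · intro i _ j _ hij
    exact Set.disjoint_left.mpr fun x hi hj => hij (hunique x hi.1 i j hi.2 hj.2)

variable {α : Type*} [DecidableEq α]

section Arithmetic

variable {ρ i : α} {J : Finset α} {m : α → ℕ}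

lemma prod_factorial_eq_mul_prod_factorial_update (hi : i ∈ J) (hmi : 0 < m i) :
    ∏ j ∈ J, (m j)! = m i * ∏ j ∈ J, (update m i (m i - 1) j)! := by
  rw [← mul_prod_erase J _ hi, ← mul_prod_erase J _ hi, update_self, ← mul_assoc,
    Nat.mul_factorial_pred hmi.ne']
  congr 1
  exact prod_congr rfl fun j hj => by rw [update_of_ne (ne_of_mem_erase hj)]

lemma sum_update_pred (hi : i ∈ J) (hmi : 0 < m i) :
    ∑ j ∈ J, update m i (m i - 1) j = ∑ j ∈ J, m j - 1 := by
  rw [sum_update_of_mem hi, ← add_sum_erase J m hi, sdiff_singleton_eq_erase]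
  omega

lemma sum_mul_update_pred_apply (hρ : ρ ∈ J) :
    ∑ i ∈ J, m i * update m i (m i - 1) ρ = m ρ * (∑ i ∈ J, m i - 1) := by
  rw [← add_sum_erase J _ hρ, ← add_sum_erase J m hρ, update_self,
    sum_congr rfl fun i hi => by rw [update_of_ne (ne_of_mem_erase hi).symm], ← sum_mul]
  rcases Nat.eq_zero_or_pos (m ρ) with h | h
  · simp [h]
  · rw [show m ρ + ∑ i ∈ J.erase ρ, m i - 1 = m ρ - 1 + ∑ i ∈ J.erase ρ, m i by omega]
    ring

lemma sum_mul_prod_factorial_eq (hρ : ρ ∈ J) (hs : 2 ≤ ∑ j ∈ J, m j) (N : α → ℕ)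
    (hN : ∀ i ∈ J, N i * ∏ j ∈ J, (m j)! =
      m i * update m i (m i - 1) ρ * (∑ j ∈ J, m j - 2)!) :
    (∑ i ∈ J, N i) * ∏ j ∈ J, (m j)! = m ρ * (∑ j ∈ J, m j - 1)! := by
  rw [sum_mul, sum_congr rfl hN, ← sum_mul, sum_mul_update_pred_apply hρ, mul_assoc,
    show ∑ j ∈ J, m j - 2 = ∑ j ∈ J, m j - 1 - 1 by omega, Nat.mul_factorial_pred (by omega)]

end Arithmetic

structure IsPartitionOfType (I G : Finset α) (m : α → ℕ) (P : α → Finset α) : Prop where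
  eq_empty_of_notMem : ∀ i, i ∉ I → P i = ∅
  disjoint : ∀ i j, i ≠ j → Disjoint (P i) (P j)
  biUnion_eq : I.biUnion P = G
  card_eq : ∀ i ∈ I, (P i).card = m i

namespace IsPartitionOfType

variable {I G : Finset α} {m : α → ℕ} {P Q : α → Finset α} {g i j : α}

lemma subset (hP : IsPartitionOfType I G m P) (i : α) : P i ⊆ G := by
  by_cases hi : i ∈ I
  · rw [← hP.biUnion_eq]; exact subset_biUnion_of_mem P hi
  · simp [hP.eq_empty_of_notMem i hi]

lemma eq_empty_of_eq_zero (hP : IsPartitionOfType I G m P) (hi : m i = 0) : P i = ∅ := by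
  by_cases hI : i ∈ I
  · rw [← card_eq_zero, hP.card_eq i hI, hi]
  · exact hP.eq_empty_of_notMem i hI

lemma eq_of_mem_of_mem (hP : IsPartitionOfType I G m P) {x : α} (hi : x ∈ P i) (hj : x ∈ P j) :
    i = j := by
  by_contra h
  exact disjoint_left.mp (hP.disjoint i j h) hi hj

lemma exists_mem (hP : IsPartitionOfType I G m P) {x : α} (hx : x ∈ G) : ∃ i ∈ I, x ∈ P i := by
  rw [← hP.biUnion_eq] at hx
  simpa using hx

lemma update_erase (hP : IsPartitionOfType I G m P) (hg : g ∈ P i) :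
    IsPartitionOfType I (G.erase g) (update m i (m i - 1)) (update P i ((P i).erase g)) where
  eq_empty_of_notMem j hj := by
    have hji : j ≠ i := by rintro rfl; simp [hP.eq_empty_of_notMem j hj] at hg
    simp [update_of_ne hji, hP.eq_empty_of_notMem j hj]
  disjoint j j' hjj' := by
    have hsub : ∀ j, update P i ((P i).erase g) j ⊆ P j := by
      intro j; rcases eq_or_ne j i with rfl | h <;> simp [*, erase_subset]
    exact (hP.disjoint j j' hjj').mono (hsub j) (hsub j')
  biUnion_eq := by
    ext x
    simp only [mem_biUnion, mem_erase, ← hP.biUnion_eq]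
    constructor
    · rintro ⟨j, hj, hx⟩
      rcases eq_or_ne j i with rfl | hji
      · simp only [update_self, mem_erase] at hx; exact ⟨hx.1, j, hj, hx.2⟩
      · rw [update_of_ne hji] at hx
        exact ⟨fun h => hji (hP.eq_of_mem_of_mem hx (h ▸ hg)), j, hj, hx⟩
    · rintro ⟨hxg, j, hj, hx⟩
      refine ⟨j, hj, ?_⟩
      rcases eq_or_ne j i with rfl | hji <;> simp [*]
  card_eq j hj := by
    rcases eq_or_ne j i with rfl | hji
    · simp [card_erase_of_mem hg, hP.card_eq j hj]
    · simp [update_of_ne hji, hP.card_eq j hj]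

lemma update_insert (hQ : IsPartitionOfType I (G.erase g) (update m i (m i - 1)) Q)
    (hi : i ∈ I) (hg : g ∈ G) (hmi : 0 < m i) :
    IsPartitionOfType I G m (update Q i (insert g (Q i))) where
  eq_empty_of_notMem j hj := by
    have hji : j ≠ i := by rintro rfl; exact hj hi
    simp [update_of_ne hji, hQ.eq_empty_of_notMem j hj]
  disjoint j j' hjj' := by
    have hgQ : ∀ j, g ∉ Q j := fun j h => by simpa using hQ.subset j h
    have hmem : ∀ {x j}, x ∈ update Q i (insert g (Q i)) j → x = g ∧ j = i ∨ x ∈ Q j := by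
      intro x j hx
      rcases eq_or_ne j i with rfl | hji
      · simpa [or_and_right] using hx
      · exact Or.inr (by simpa [update_of_ne hji] using hx)
    rw [disjoint_left]
    intro x hx hx'
    rcases hmem hx with ⟨rfl, rfl⟩ | hxj <;> rcases hmem hx' with ⟨hxg, rfl⟩ | hxj'
    · exact hjj' rfl
    · exact hgQ _ hxj'
    · exact hgQ _ (hxg ▸ hxj)
    · exact disjoint_left.mp (hQ.disjoint j j' hjj') hxj hxj'
  biUnion_eq := by
    ext x
    rw [← insert_erase hg, ← hQ.biUnion_eq]
    simp only [mem_biUnion, mem_insert]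
    constructor
    · rintro ⟨j, hj, hx⟩
      rcases eq_or_ne j i with rfl | hji
      · simp only [update_self, mem_insert] at hx
        exact hx.imp_right fun hx => ⟨j, hj, hx⟩
      · exact Or.inr ⟨j, hj, by simpa [update_of_ne hji] using hx⟩
    · rintro (rfl | ⟨j, hj, hx⟩)
      · exact ⟨i, hi, by simp⟩
      · refine ⟨j, hj, ?_⟩
        rcases eq_or_ne j i with rfl | hji <;> simp [*]
  card_eq j hj := by
    rcases eq_or_ne j i with rfl | hji
    · have := hQ.card_eq j hj
      have hgQ : g ∉ Q j := fun h => by simpa using hQ.subset j h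
      simp only [update_self] at this ⊢
      rw [card_insert_of_notMem hgQ]; omega
    · simpa [update_of_ne hji] using hQ.card_eq j hj

lemma erase_index_iff (hmg : m g = 0) :
    IsPartitionOfType (I.erase g) G m P ↔ IsPartitionOfType I G m P := by
  constructor
  · intro hP
    have hPg : P g = ∅ := hP.eq_empty_of_notMem g (notMem_erase g I)
    refine ⟨fun j hj => hP.eq_empty_of_notMem j fun h => hj (mem_of_mem_erase h), hP.disjoint,
      by rw [← biUnion_erase_of_eq_empty I hPg, hP.biUnion_eq], fun j hj => ?_⟩
    rcases eq_or_ne j g with rfl | hjg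
    · rw [hPg, hmg, card_empty]
    · exact hP.card_eq j (mem_erase.mpr ⟨hjg, hj⟩)
  · intro hP
    have hPg : P g = ∅ := hP.eq_empty_of_eq_zero hmg
    refine ⟨fun j hj => ?_, hP.disjoint, by rw [biUnion_erase_of_eq_empty I hPg, hP.biUnion_eq],
      fun j hj => hP.card_eq j (mem_of_mem_erase hj)⟩
    rcases eq_or_ne j g with rfl | hjg
    · exact hPg
    · exact hP.eq_empty_of_notMem j fun h => hj (mem_erase.mpr ⟨hjg, h⟩)

end IsPartitionOfType

def IsArcClosed (ρ : α) (I : Finset α) (P : α → Finset α) (F : Finset α) : Prop :=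
  ∀ i ∈ F, ∀ j ∈ P i, j ∈ I.erase ρ → j ∈ F

def ReachesAll (ρ : α) (I : Finset α) (P : α → Finset α) : Prop :=
  ∀ F : Finset α, ρ ∈ F → IsArcClosed ρ I P F → I ⊆ F

section Reachability

variable {ρ g i j : α} {I F : Finset α} {P Q : α → Finset α}

lemma isArcClosed_update_insert_iff (hg : g ∉ I.erase ρ) :
    IsArcClosed ρ I (update Q i (insert g (Q i))) F ↔ IsArcClosed ρ I Q F := by
  refine forall₂_congr fun a _ => ⟨fun h j hj => h j ?_, fun h j hj hjI => h j ?_ hjI⟩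
  · rcases eq_or_ne a i with rfl | hai <;> simp [*]
  · rcases eq_or_ne a i with rfl | hai
    · rcases mem_insert.mp (by simpa using hj) with rfl | hj
      · exact absurd hjI hg
      · exact hj
    · simpa [update_of_ne hai] using hj

lemma reachesAll_update_insert_iff (hg : g ∉ I.erase ρ) :
    ReachesAll ρ I (update Q i (insert g (Q i))) ↔ ReachesAll ρ I Q := by
  simp only [ReachesAll, isArcClosed_update_insert_iff hg]

lemma reachesAll_update_insert_iff_erase (hg : g ∈ I.erase ρ) (hi : i ∈ I.erase g)
    (hQg : Q g = ∅) :
    ReachesAll ρ I (update Q i (insert g (Q i))) ↔ ReachesAll ρ (I.erase g) Q := by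
  have hig : i ≠ g := ne_of_mem_erase hi
  constructor
  · intro hP F hρF hF
    have : I ⊆ insert g F := by
      refine hP _ (mem_insert_of_mem hρF) fun a ha j hj hjI => ?_
      rcases eq_or_ne j g with rfl | hjg
      · exact mem_insert_self _ _
      rcases mem_insert.mp ha with rfl | haF
      · simp [update_of_ne hig.symm, hQg] at hj
      have hjQ : j ∈ Q a := by
        rcases eq_or_ne a i with rfl | hai
        · simpa [hjg] using hj
        · simpa [update_of_ne hai] using hj
      exact mem_insert_of_mem (hF a haF j hjQ (by simp_all))
    intro x hx
    simpa [ne_of_mem_erase hx] using this (mem_of_mem_erase hx)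
  · intro hQ F hρF hF
    have hsub : I.erase g ⊆ F := hQ F hρF fun a ha j hj hjI => hF a ha j (by
      rcases eq_or_ne a i with rfl | hai <;> simp [*]) (by simp_all)
    have hgF : g ∈ F := hF i (hsub hi) g (by simp) hg
    intro x hx
    rcases eq_or_ne x g with rfl | hxg
    · exact hgF
    · exact hsub (mem_erase.mpr ⟨hxg, hx⟩)

lemma not_reachesAll_of_eq_empty (hPρ : P ρ = ∅) (hj : j ∈ I.erase ρ) : ¬ ReachesAll ρ I P := by
  intro hP
  have : I ⊆ {ρ} := hP {ρ} (mem_singleton_self ρ) fun a ha j hj _ => by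
    rw [mem_singleton.mp ha, hPρ] at hj; simp at hj
  exact ne_of_mem_erase hj (mem_singleton.mp (this (mem_of_mem_erase hj)))

end Reachability

lemma finite_setOf_isPartitionOfType (I G : Finset α) (m : α → ℕ) :
    {P | IsPartitionOfType I G m P}.Finite := by
  refine Set.Finite.of_finite_image (f := fun P (i : I) => P i) ?_ ?_
  · refine (Set.Finite.pi (t := fun _ => (G.powerset : Set (Finset α)))
      fun _ => G.powerset.finite_toSet).subset ?_
    rintro _ ⟨P, hP, rfl⟩ i -
    simpa using hP.subset i
  · intro P hP Q hQ h
    funext i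
    by_cases hi : i ∈ I
    · exact congrFun h ⟨i, hi⟩
    · rw [hP.eq_empty_of_notMem i hi, hQ.eq_empty_of_notMem i hi]

lemma ncard_sep_mem_eq_ncard_update {I G : Finset α} {m : α → ℕ} {g i : α}
    (R : (α → Finset α) → Prop) (hi : i ∈ I) (hg : g ∈ G) (hmi : 0 < m i) :
    {P ∈ {P | IsPartitionOfType I G m P ∧ R P} | g ∈ P i}.ncard =
      {Q | IsPartitionOfType I (G.erase g) (update m i (m i - 1)) Q ∧
        R (update Q i (insert g (Q i)))}.ncard := by
  refine Set.ncard_congr (fun P _ => update P i ((P i).erase g)) ?_ ?_ ?_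
  · rintro P ⟨⟨hP, hR⟩, hgP⟩
    refine ⟨hP.update_erase hgP, ?_⟩
    simpa [insert_erase hgP] using hR
  · rintro P P' ⟨-, hgP⟩ ⟨-, hgP'⟩ h
    have hi := congrFun h i
    simp only [update_self] at hi
    calc P = update (update P i ((P i).erase g)) i (insert g ((P i).erase g)) := by
          simp [insert_erase hgP]
      _ = update (update P' i ((P' i).erase g)) i (insert g ((P' i).erase g)) := by rw [h, hi]
      _ = P' := by simp [insert_erase hgP']
  · rintro Q ⟨hQ, hR⟩
    have hgQ : g ∉ Q i := fun h => by simpa using hQ.subset i h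
    exact ⟨update Q i (insert g (Q i)), ⟨⟨hQ.update_insert hi hg hmi, hR⟩, by simp⟩,
      by simp [erase_insert hgQ]⟩

def reachingPartitions (ρ : α) (I G : Finset α) (m : α → ℕ) : Set (α → Finset α) :=
  {P | IsPartitionOfType I G m P ∧ ReachesAll ρ I P}

section Counting

variable {ρ g i : α} {I G : Finset α} {m : α → ℕ}

lemma ncard_reachingPartitions_eq_sum (hg : g ∈ G) :
    (reachingPartitions ρ I G m).ncard =
      ∑ i ∈ I, {P ∈ reachingPartitions ρ I G m | g ∈ P i}.ncard :=
  Set.ncard_eq_sum_ncard_sep ((finite_setOf_isPartitionOfType I G m).subset fun _ hP => hP.1) I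
    _ (fun _ hP => hP.1.exists_mem hg) fun _ hP _ _ hi hj => hP.1.eq_of_mem_of_mem hi hj

lemma sep_mem_eq_empty_of_eq_zero (hmi : m i = 0) :
    {P ∈ reachingPartitions ρ I G m | g ∈ P i} = ∅ := by
  ext P
  simp only [Set.mem_sep_iff, Set.mem_empty_iff_false, iff_false, not_and]
  intro hP hg
  simp [hP.1.eq_empty_of_eq_zero hmi] at hg

lemma ncard_sep_mem_of_notMem_erase (hg : g ∈ G) (hgI : g ∉ I.erase ρ) (hi : i ∈ I)
    (hmi : 0 < m i) :
    {P ∈ reachingPartitions ρ I G m | g ∈ P i}.ncard =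
      (reachingPartitions ρ I (G.erase g) (update m i (m i - 1))).ncard := by
  rw [reachingPartitions, ncard_sep_mem_eq_ncard_update _ hi hg hmi]
  simp only [reachesAll_update_insert_iff hgI]
  rfl

lemma ncard_sep_mem_of_eq_zero (hg : g ∈ G) (hgI : g ∈ I.erase ρ) (hmg : m g = 0)
    (hi : i ∈ I.erase g) (hmi : 0 < m i) :
    {P ∈ reachingPartitions ρ I G m | g ∈ P i}.ncard =
      (reachingPartitions ρ (I.erase g) (G.erase g) (update m i (m i - 1))).ncard := by
  have hmg' : update m i (m i - 1) g = 0 := by simp [update_of_ne (ne_of_mem_erase hi).symm, hmg]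
  rw [reachingPartitions, ncard_sep_mem_eq_ncard_update _ (mem_of_mem_erase hi) hg hmi]
  congr 1
  ext Q
  change (_ ∧ _) ↔ (_ ∧ _)
  rw [← IsPartitionOfType.erase_index_iff hmg']
  exact and_congr_right fun hQ =>
    reachesAll_update_insert_iff_erase hgI hi (hQ.eq_empty_of_eq_zero hmg')

lemma reachingPartitions_eq_empty (hmρ : m ρ = 0) {j : α} (hj : j ∈ I.erase ρ) :
    reachingPartitions ρ I G m = ∅ :=
  Set.eq_empty_of_forall_notMem fun _ hP =>
    not_reachesAll_of_eq_empty (hP.1.eq_empty_of_eq_zero hmρ) hj hP.2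

lemma ncard_reachingPartitions_eq_one (hρ : ρ ∈ I) (hIG : I.erase ρ ⊆ G)
    (hm : ∀ i ∈ I.erase ρ, m i = 0) (hmρ : m ρ = G.card) :
    (reachingPartitions ρ I G m).ncard = 1 := by
  refine Set.ncard_eq_one.mpr
    ⟨update (fun _ => ∅) ρ G, Set.eq_singleton_iff_unique_mem.mpr ⟨?_, ?_⟩⟩
  · refine ⟨⟨fun i hi => ?_, fun i j hij => ?_, ?_, fun i hi => ?_⟩, ?_⟩
    · simp [update_of_ne (ne_of_mem_of_not_mem hρ hi).symm]
    · rcases eq_or_ne i ρ with rfl | hiρ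
      · simp [update_of_ne hij.symm]
      · simp [update_of_ne hiρ]
    · ext x
      simp only [mem_biUnion, update_apply]
      constructor
      · rintro ⟨i, -, hx⟩
        split_ifs at hx <;> simp_all
      · exact fun hx => ⟨ρ, hρ, by simpa using hx⟩
    · rcases eq_or_ne i ρ with rfl | hiρ
      · simp [hmρ]
      · simp [update_of_ne hiρ, hm i (mem_erase.mpr ⟨hiρ, hi⟩)]
    · intro F hρF hF x hx
      rcases eq_or_ne x ρ with rfl | hxρ
      · exact hρF
      · have hxI : x ∈ I.erase ρ := mem_erase.mpr ⟨hxρ, hx⟩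
        exact hF ρ hρF x (by simpa using hIG hxI) hxI
  · rintro P ⟨hP, -⟩
    funext i
    rcases eq_or_ne i ρ with rfl | hiρ
    · simpa using eq_of_subset_of_card_le (hP.subset i) (by rw [hP.card_eq i hρ, hmρ])
    · rw [update_of_ne hiρ]
      by_cases hi : i ∈ I
      · exact hP.eq_empty_of_eq_zero (hm i (mem_erase.mpr ⟨hiρ, hi⟩))
      · exact hP.eq_empty_of_notMem i hi

lemma ncard_reachingPartitions_mul_prod_factorial_of_card_eq_one (hρ : ρ ∈ I)
    (hIG : I.erase ρ ⊆ G) (hG : G.card = ∑ i ∈ I, m i) (hG1 : G.card = 1) :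
    (reachingPartitions ρ I G m).ncard * ∏ i ∈ I, (m i)! = m ρ * (G.card - 1)! := by
  have hsplit : G.card = m ρ + ∑ i ∈ I.erase ρ, m i := by rw [add_sum_erase I m hρ, hG]
  by_cases hmρ : m ρ = 0
  · obtain ⟨j, hj, hmj⟩ : ∃ j ∈ I.erase ρ, m j ≠ 0 := by
      by_contra! h
      rw [sum_eq_zero h, hmρ] at hsplit
      omega
    simp [reachingPartitions_eq_empty hmρ hj, hmρ]
  have hm : ∀ i ∈ I.erase ρ, m i = 0 := sum_eq_zero_iff.mp (by omega)
  rw [ncard_reachingPartitions_eq_one hρ hIG hm (by omega), hG1,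
    prod_eq_one fun i hi => Nat.factorial_eq_one.mpr ?_]
  · rw [Nat.sub_self, Nat.factorial_zero]
    omega
  · rcases eq_or_ne i ρ with rfl | hiρ
    · omega
    · simp [hm i (mem_erase.mpr ⟨hiρ, hi⟩)]

lemma ncard_reachingPartitions_mul_prod_factorial_of_fibers (hρ : ρ ∈ I)
    (hs : 2 ≤ ∑ j ∈ I, m j) (hg : g ∈ G)
    (hfiber : ∀ i ∈ I, 0 < m i → {P ∈ reachingPartitions ρ I G m | g ∈ P i}.ncard *
      ∏ j ∈ I, (m j)! = m i * update m i (m i - 1) ρ * (∑ j ∈ I, m j - 2)!) :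
    (reachingPartitions ρ I G m).ncard * ∏ i ∈ I, (m i)! = m ρ * (∑ i ∈ I, m i - 1)! := by
  rw [ncard_reachingPartitions_eq_sum hg]
  refine sum_mul_prod_factorial_eq hρ hs _ fun i hi => ?_
  rcases Nat.eq_zero_or_pos (m i) with hmi | hmi
  · simp [sep_mem_eq_empty_of_eq_zero hmi, hmi]
  · exact hfiber i hi hmi

end Counting

theorem ncard_reachingPartitions_mul_prod_factorial {ρ : α} {I G : Finset α} {m : α → ℕ}
    (hρ : ρ ∈ I) (hIG : I.erase ρ ⊆ G) (hG : G.card = ∑ i ∈ I, m i) (hG0 : G.Nonempty) :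
    (reachingPartitions ρ I G m).ncard * ∏ i ∈ I, (m i)! = m ρ * (G.card - 1)! := by
  induction G using Finset.strongInduction generalizing I m with
  | H G IH =>
  obtain hs | hs : G.card = 1 ∨ 2 ≤ G.card := by have := hG0.card_pos; omega
  · exact ncard_reachingPartitions_mul_prod_factorial_of_card_eq_one hρ hIG hG hs
  have hremove : ∀ g ∈ G, ∀ J : Finset α, ρ ∈ J → J.erase ρ ⊆ G.erase g → ∑ j ∈ J, m j = G.card →
      ∀ i ∈ J, 0 < m i →
      (reachingPartitions ρ J (G.erase g) (update m i (m i - 1))).ncard * ∏ j ∈ J, (m j)! =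
        m i * update m i (m i - 1) ρ * (G.card - 2)! := by
    intro g hg J hρJ hJG hJ i hi hmi
    have hcard : (G.erase g).card = ∑ j ∈ J, update m i (m i - 1) j := by
      rw [card_erase_of_mem hg, sum_update_pred hi hmi, hJ]
    rw [prod_factorial_eq_mul_prod_factorial_update hi hmi, mul_left_comm,
      IH _ (erase_ssubset hg) hρJ hJG hcard (by rw [← card_pos, card_erase_of_mem hg]; omega),
      card_erase_of_mem hg, mul_assoc, Nat.sub_sub]
  rw [hG] at hs ⊢
  by_cases hplain : ∃ g ∈ G, g ∉ I.erase ρ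
  · obtain ⟨g, hg, hgI⟩ := hplain
    refine ncard_reachingPartitions_mul_prod_factorial_of_fibers hρ hs hg fun i hi hmi => ?_
    rw [ncard_sep_mem_of_notMem_erase hg hgI hi hmi, ← hG]
    exact hremove g hg I hρ (erase_eq_of_notMem hgI ▸ erase_subset_erase g hIG) hG.symm i hi hmi
  -- every element of `G` is a non-root index, so `|G| < |I|` and some block is empty
  push Not at hplain
  obtain ⟨b, hbI, hmb⟩ := exists_eq_zero_of_sum_lt_card (s := I) (f := m) <| by
    have := card_le_card hplain
    rw [card_erase_of_mem hρ] at this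
    have := card_pos.mpr ⟨ρ, hρ⟩
    omega
  obtain rfl | hbρ := eq_or_ne b ρ
  · obtain ⟨j, hj⟩ := hG0
    simp [reachingPartitions_eq_empty hmb (hplain j hj), hmb]
  have hbρ : b ∈ I.erase ρ := mem_erase.mpr ⟨hbρ, hbI⟩
  have hbG : b ∈ G := hIG hbρ
  refine ncard_reachingPartitions_mul_prod_factorial_of_fibers hρ hs hbG fun i hi hmi => ?_
  have hib : i ∈ I.erase b := mem_erase.mpr ⟨by rintro rfl; omega, hi⟩
  rw [ncard_sep_mem_of_eq_zero hbG hbρ hmb hib hmi, ← hG,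
    ← prod_erase I (f := fun j => (m j)!) (a := b) (by simp [hmb])]
  exact hremove b hbG (I.erase b) (mem_erase.mpr ⟨(ne_of_mem_erase hbρ).symm, hρ⟩)
    (erase_right_comm (s := I) ▸ erase_subset_erase b hIG) (by rw [sum_erase _ hmb, hG]) i hib hmi

lemma isOrderedPartition_iff {r s : ℕ} {m : ℕ → ℕ} {P : ℕ → Finset ℕ} :
    IsOrderedPartition r s m P ↔ IsPartitionOfType (Icc 1 r) (Icc 1 s) m P :=
  ⟨fun ⟨h₁, h₂, h₃, h₄⟩ => ⟨h₁, h₂, h₃, h₄⟩, fun ⟨h₁, h₂, h₃, h₄⟩ => ⟨h₁, h₂, h₃, h₄⟩⟩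

lemma arcClosed_iff {r : ℕ} {P : ℕ → Finset ℕ} {F : Finset ℕ} :
    ArcClosed r P F ↔ IsArcClosed 1 (Icc 1 r) P F := by
  refine forall₂_congr fun i _ => forall₂_congr fun j _ => ?_
  simp only [mem_erase, mem_Icc]
  exact ⟨fun h ⟨hj1, _, hjr⟩ => h (by omega) hjr, fun h hj2 hjr => h ⟨by omega, by omega, hjr⟩⟩

lemma isReachSet_Icc_iff {r : ℕ} (hr : 1 ≤ r) {P : ℕ → Finset ℕ} :
    IsReachSet r P (Icc 1 r) ↔ ReachesAll 1 (Icc 1 r) P := by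
  simp only [IsReachSet, ReachesAll, arcClosed_iff]
  refine ⟨fun h => h.2.2, fun h => ⟨mem_Icc.mpr ⟨le_rfl, hr⟩, fun i _ j _ hj => ?_, h⟩⟩
  exact mem_of_mem_erase hj

/-- **Proposition `prop:induction`.** For `k ≥ 1` and positive integers
`m 1, …, m k` with `s = m 1 + ⋯ + m k`, the number of ordered partitions
`(P 1, …, P k)` of `{1, …, s}` of type `(m 1, …, m k)` whose reachable set
`R(P)` is the full index set `{1, …, k}` equals
`(s - 1)! / ((m 1 - 1)! ⋅ m 2 ! ⋯ m k !)`. -/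
theorem count_partitions_full_reach
    (k : ℕ) (hk : 1 ≤ k) (m : ℕ → ℕ) (hm : ∀ i ∈ Finset.Icc 1 k, 0 < m i)
    (s : ℕ) (hs : s = ∑ i ∈ Finset.Icc 1 k, m i) :
    {P : ℕ → Finset ℕ |
        IsOrderedPartition k s m P ∧ IsReachSet k P (Finset.Icc 1 k)}.ncard =
      (s - 1).factorial /
        ((m 1 - 1).factorial * ∏ i ∈ Finset.Icc 2 k, (m i).factorial) := by
  have h1 : 1 ∈ Icc 1 k := mem_Icc.mpr ⟨le_rfl, hk⟩
  have hm1 : 0 < m 1 := hm 1 h1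
  have herase : (Icc 1 k).erase 1 = Icc 2 k := by ext; simp only [mem_erase, mem_Icc]; omega
  have hks : k ≤ s := by
    simpa [hs] using card_nsmul_le_sum (Icc 1 k) m 1 hm
  have hset : {P | IsOrderedPartition k s m P ∧ IsReachSet k P (Icc 1 k)} =
      reachingPartitions 1 (Icc 1 k) (Icc 1 s) m := by
    ext P
    exact and_congr isOrderedPartition_iff (isReachSet_Icc_iff hk)
  have hcount := ncard_reachingPartitions_mul_prod_factorial (G := Icc 1 s) h1
    (by rw [herase]; exact Icc_subset_Icc_left one_le_two |>.trans (Icc_subset_Icc_right hks))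
    (by rw [Nat.card_Icc, ← hs]; omega)
    (nonempty_Icc.mpr (by omega))
  rw [← mul_prod_erase _ _ h1, herase, Nat.card_Icc, Nat.add_sub_cancel,
    ← Nat.mul_factorial_pred hm1.ne', mul_assoc, mul_left_comm] at hcount
  rw [hset]
  exact (Nat.div_eq_of_eq_mul_left (by positivity) (Nat.eq_of_mul_eq_mul_left hm1 hcount).symm).symm
end

section
/- Let r ≥ 1 be an integer, m_1, …, m_r positive integers with s = m_1 + ⋯ + m_r, and let F ⊆ {1, …, r} be a subset with 1 ∈ F, with complement Fᶜ = {1,…,r} \ F. Then the number of ordered partitions (P_1, …, P_r) of {1, …, s} of type (m_1, …, m_r) whose reachable set R(P) equals F is exactly binom(s − r + 1, S(Fᶜ) − |Fᶜ|) · C(F) · C(Fᶜ). -/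
/-!
Encode an ordered partition by the map `φ` sending each `x ∈ {1, …, s}` to the index of its
block. The arcs of the reachability graph are `φ j → j` for `2 ≤ j ≤ r`, so `R(P) = F` says
exactly that every vertex of `F \ {1}` reaches `1` by iterating `φ` while every vertex of `Fᶜ` is
sent into `Fᶜ`. The elements sent into `Fᶜ` are then the vertices of `Fᶜ` together with
`S(Fᶜ) - |Fᶜ|` of the `s - r + 1` elements that are not among the vertices `2, …, r`. Once these
are chosen, `φ` splits into an arbitrary assignment to `Fᶜ`, counted by the multinomial `C(Fᶜ)`,
and an assignment to `F` under which `F \ {1}` forms a tree rooted at `1`. The latter are counted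
by `C(F)`, a generalised Cayley formula: removing an element that is not a vertex, or a leaf
vertex, reproduces the recursion `multinomial f = ∑ᵢ multinomial (f - δᵢ)`.
-/

open Finset Function

theorem Finset.sum_update_pred_add_one {α : Type*} [DecidableEq α] {s : Finset α} {f : α → ℕ}
    {i : α} (hi : i ∈ s) (hfi : 0 < f i) : ∑ j ∈ s, update f i (f i - 1) j + 1 = ∑ j ∈ s, f j := by
  rw [sum_update_of_mem hi, ← add_sum_erase s f hi, sdiff_singleton_eq_erase]; omega

theorem Nat.multinomial_update_pred_mul {α : Type*} [DecidableEq α] {s : Finset α} {f : α → ℕ}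
    {i : α} (hi : i ∈ s) (hfi : 0 < f i) :
    Nat.multinomial s (update f i (f i - 1)) * ∑ j ∈ s, f j = f i * Nat.multinomial s f := by
  have hprod : ∏ j ∈ s, (f j).factorial = f i * ∏ j ∈ s, (update f i (f i - 1) j).factorial := by
    rw [← mul_prod_erase s (fun j => (f j).factorial) hi,
      ← mul_prod_erase s (fun j => (update f i (f i - 1) j).factorial) hi, update_self,
      prod_congr rfl fun j hj => congrArg _ (update_of_ne (ne_of_mem_erase hj) _ _), ← mul_assoc,
      Nat.mul_factorial_pred hfi.ne']
  apply Nat.eq_of_mul_eq_mul_left (Nat.prod_factorial_pos s f)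
  calc (∏ j ∈ s, (f j).factorial) * (Nat.multinomial s (update f i (f i - 1)) * ∑ j ∈ s, f j)
      = f i * ((∏ j ∈ s, (update f i (f i - 1) j).factorial) *
          Nat.multinomial s (update f i (f i - 1)) * ∑ j ∈ s, f j) := by rw [hprod]; ring
    _ = f i * ((∑ j ∈ s, f j - 1).factorial * ∑ j ∈ s, f j) := by
      rw [Nat.multinomial_spec, ← sum_update_pred_add_one hi hfi, Nat.add_sub_cancel]
    _ = (∏ j ∈ s, (f j).factorial) * (f i * Nat.multinomial s f) := by
      have := sum_update_pred_add_one hi hfi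
      rw [mul_comm _ (∑ j ∈ s, f j), Nat.mul_factorial_pred (by omega), ← Nat.multinomial_spec]
      ring

theorem Nat.multinomial_eq_sum_update_pred {α : Type*} [DecidableEq α] {s : Finset α}
    {f : α → ℕ} (h : 0 < ∑ j ∈ s, f j) :
    Nat.multinomial s f = ∑ i ∈ s with 0 < f i, Nat.multinomial s (update f i (f i - 1)) := by
  apply Nat.eq_of_mul_eq_mul_right h
  rw [sum_mul, sum_congr rfl fun i hi =>
    Nat.multinomial_update_pred_mul (mem_filter.1 hi).1 (mem_filter.1 hi).2, ← sum_mul,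
    sum_filter_of_ne fun i _ hi => Nat.pos_of_ne_zero hi, mul_comm]

theorem Function.update_pred_comm {α : Type*} [DecidableEq α] (f : α → ℕ) (a b : α) :
    update (update f a (f a - 1)) b (update f a (f a - 1) b - 1) =
      update (update f b (f b - 1)) a (update f b (f b - 1) a - 1) := by
  funext x
  simp only [update_apply]
  split_ifs <;> subst_vars <;> simp_all

namespace PartitionReach

open Classical

def ReachesOne (φ : ℕ → ℕ) (j : ℕ) : Prop := ∃ k, φ^[k] j = 1

section Reach

variable {φ ψ : ℕ → ℕ} {j : ℕ}

theorem reachesOne_one (φ : ℕ → ℕ) : ReachesOne φ 1 := ⟨0, rfl⟩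

theorem ReachesOne.of_apply (h : ReachesOne φ (φ j)) : ReachesOne φ j :=
  let ⟨k, hk⟩ := h; ⟨k + 1, by rwa [iterate_succ_apply]⟩

theorem ReachesOne.apply (h : ReachesOne φ j) (hj : j ≠ 1) : ReachesOne φ (φ j) := by
  obtain ⟨_ | k, hk⟩ := h
  · exact absurd hk hj
  · exact ⟨k, by rwa [iterate_succ_apply] at hk⟩

theorem ReachesOne.congr {S : Set ℕ} (hS : ∀ x ∈ S, x ≠ 1 → φ x ∈ S)
    (heq : ∀ x ∈ S, x ≠ 1 → ψ x = φ x) (hj : j ∈ S) (h : ReachesOne φ j) :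
    ReachesOne ψ j := by
  obtain ⟨k, hk⟩ := h
  induction k generalizing j with
  | zero => exact ⟨0, hk⟩
  | succ k ih =>
    by_cases hj1 : j = 1
    · exact hj1 ▸ reachesOne_one ψ
    · rw [iterate_succ_apply] at hk
      have := ih (hS j hj hj1) hk
      rw [← heq j hj hj1] at this
      exact this.of_apply

theorem not_reachesOne_of_mapsTo {C : Set ℕ} (hC : Set.MapsTo φ C C) (h1 : 1 ∉ C)
    (hj : j ∈ C) : ¬ ReachesOne φ j := fun ⟨k, hk⟩ => h1 (hk ▸ hC.iterate k hj)

end Reach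

section Assignments

variable {E G : Finset ℕ} {m φ ψ : ℕ → ℕ} {e : ℕ}

/-- `φ` vanishes off `E`, so that an assignment is determined by its values on `E`. -/
structure IsAssignment (E G : Finset ℕ) (m : ℕ → ℕ) (φ : ℕ → ℕ) : Prop where
  eq_zero : ∀ x ∉ E, φ x = 0
  mem : ∀ x ∈ E, φ x ∈ G
  card_fiber : ∀ i ∈ G, #{x ∈ E | φ x = i} = m i

noncomputable def assignments (E G : Finset ℕ) (m : ℕ → ℕ) : Finset (ℕ → ℕ) :=
  ((E.pi fun _ => G).image fun f x => if h : x ∈ E then f x h else 0).filter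
    fun φ => ∀ i ∈ G, #{x ∈ E | φ x = i} = m i

theorem mem_assignments : φ ∈ assignments E G m ↔ IsAssignment E G m φ := by
  simp only [assignments, mem_filter, mem_image, mem_pi]
  constructor
  · rintro ⟨⟨f, hf, rfl⟩, hcard⟩
    exact ⟨fun x hx => dif_neg hx, fun x hx => by simpa [hx] using hf x hx, hcard⟩
  · intro hφ
    refine ⟨⟨fun x _ => φ x, fun x hx => hφ.mem x hx, funext fun x => ?_⟩, hφ.card_fiber⟩
    by_cases hx : x ∈ E
    · simp [hx]
    · simp [hx, hφ.eq_zero x hx]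

theorem card_filter_update_eq (he : e ∈ E) (φ : ℕ → ℕ) (a j : ℕ) :
    #{x ∈ E | update φ e a x = j} = #{x ∈ E.erase e | φ x = j} + if a = j then 1 else 0 := by
  rw [card_filter, card_filter, ← add_sum_erase E _ he, update_self, add_comm]
  congr 1
  exact sum_congr rfl fun x hx => by rw [update_of_ne (ne_of_mem_erase hx)]

namespace IsAssignment

theorem pos_apply (hφ : IsAssignment E G m φ) {x : ℕ} (hx : x ∈ E) : 0 < m (φ x) := by
  rw [← hφ.card_fiber _ (hφ.mem x hx)]
  exact card_pos.2 ⟨x, mem_filter.2 ⟨hx, rfl⟩⟩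

theorem erase (hφ : IsAssignment E G m φ) (he : e ∈ E) :
    IsAssignment (E.erase e) G (update m (φ e) (m (φ e) - 1)) (update φ e 0) where
  eq_zero x hx := by
    by_cases hxe : x = e
    · rw [hxe, update_self]
    · rw [update_of_ne hxe, hφ.eq_zero x fun hxE => hx (mem_erase.2 ⟨hxe, hxE⟩)]
  mem x hx := by rw [update_of_ne (ne_of_mem_erase hx)]; exact hφ.mem x (mem_of_mem_erase hx)
  card_fiber i hi := by
    have h := hφ.card_fiber i hi
    rw [← update_eq_self e φ, card_filter_update_eq he] at h
    rw [filter_congr fun x hx => by rw [update_of_ne (ne_of_mem_erase hx)]]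
    by_cases hei : φ e = i
    · subst hei; rw [update_self, if_pos rfl] at *; omega
    · rw [update_of_ne (Ne.symm hei), if_neg hei] at *; omega

theorem update {i : ℕ} (hψ : IsAssignment (E.erase e) G (update m i (m i - 1)) ψ)
    (he : e ∈ E) (hi : i ∈ G) (hmi : 0 < m i) : IsAssignment E G m (update ψ e i) where
  eq_zero x hx := by
    rw [update_of_ne (ne_of_mem_of_not_mem he hx).symm]
    exact hψ.eq_zero x fun hxE => hx (mem_of_mem_erase hxE)
  mem x hx := by
    by_cases hxe : x = e
    · rw [hxe, update_self]; exact hi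
    · rw [update_of_ne hxe]; exact hψ.mem x (mem_erase.2 ⟨hxe, hx⟩)
  card_fiber j hj := by
    rw [card_filter_update_eq he, hψ.card_fiber j hj]
    by_cases hij : i = j
    · subst hij; rw [update_self, if_pos rfl]; omega
    · rw [update_of_ne (Ne.symm hij), if_neg hij, add_zero]

theorem card_filter_mem (hφ : IsAssignment E G m φ) {G' : Finset ℕ} (hG' : G' ⊆ G) :
    #{x ∈ E | φ x ∈ G'} = ∑ i ∈ G', m i := by
  rw [card_eq_sum_card_fiberwise (s := {x ∈ E | φ x ∈ G'}) (f := φ) (t := G') fun x hx =>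
    (mem_filter.1 (mem_coe.1 hx)).2]
  refine sum_congr rfl fun i hi => ?_
  rw [filter_filter, ← hφ.card_fiber i (hG' hi)]
  exact congrArg card (filter_congr fun x _ => ⟨fun h => h.2, fun h => ⟨h ▸ hi, h⟩⟩)

theorem piecewise (hφ : IsAssignment E G m φ) {D G' : Finset ℕ} (hD : D ⊆ E) (hG' : G' ⊆ G)
    (hDG : ∀ x ∈ E, x ∈ D ↔ φ x ∈ G') : IsAssignment D G' m (D.piecewise φ 0) where
  eq_zero x hx := piecewise_eq_of_notMem _ _ _ hx
  mem x hx := by rw [piecewise_eq_of_mem _ _ _ hx]; exact (hDG x (hD hx)).1 hx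
  card_fiber i hi := by
    rw [← hφ.card_fiber i (hG' hi)]
    refine congrArg card (ext fun x => ?_)
    simp only [mem_filter]
    constructor
    · rintro ⟨hxD, hx⟩
      exact ⟨hD hxD, by rwa [piecewise_eq_of_mem _ _ _ hxD] at hx⟩
    · rintro ⟨hxE, rfl⟩
      have hxD := (hDG x hxE).2 hi
      exact ⟨hxD, piecewise_eq_of_mem _ _ _ hxD⟩

theorem add {E₁ E₂ G₁ G₂ : Finset ℕ} {ψ₁ ψ₂ : ℕ → ℕ} (h₁ : IsAssignment E₁ G₁ m ψ₁)
    (h₂ : IsAssignment E₂ G₂ m ψ₂) (hE : Disjoint E₁ E₂) (hG : Disjoint G₁ G₂) :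
    IsAssignment (E₁ ∪ E₂) (G₁ ∪ G₂) m (ψ₁ + ψ₂) := by
  have eq₁ : ∀ x ∈ E₁, (ψ₁ + ψ₂) x = ψ₁ x := fun x hx => by
    simp [h₂.eq_zero x (disjoint_left.1 hE hx)]
  have eq₂ : ∀ x ∈ E₂, (ψ₁ + ψ₂) x = ψ₂ x := fun x hx => by
    simp [h₁.eq_zero x (disjoint_right.1 hE hx)]
  refine ⟨fun x hx => ?_, fun x hx => ?_, fun i hi => ?_⟩
  · rw [mem_union, not_or] at hx
    simp [h₁.eq_zero x hx.1, h₂.eq_zero x hx.2]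
  · rcases mem_union.1 hx with hx | hx
    · rw [eq₁ x hx]; exact mem_union_left _ (h₁.mem x hx)
    · rw [eq₂ x hx]; exact mem_union_right _ (h₂.mem x hx)
  · have f₁ : {x ∈ E₁ | (ψ₁ + ψ₂) x = i} = {x ∈ E₁ | ψ₁ x = i} :=
      filter_congr fun x hx => by rw [eq₁ x hx]
    have f₂ : {x ∈ E₂ | (ψ₁ + ψ₂) x = i} = {x ∈ E₂ | ψ₂ x = i} :=
      filter_congr fun x hx => by rw [eq₂ x hx]
    rw [filter_union, f₁, f₂]
    rcases mem_union.1 hi with hi | hi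
    · rw [filter_false_of_mem fun x hx (h : ψ₂ x = i) => disjoint_left.1 hG hi (h ▸ h₂.mem x hx),
        union_empty, h₁.card_fiber i hi]
    · rw [filter_false_of_mem fun x hx (h : ψ₁ x = i) => disjoint_right.1 hG hi (h ▸ h₁.mem x hx),
        empty_union, h₂.card_fiber i hi]

theorem filter_add_mem_eq {E₁ E₂ G₁ G₂ : Finset ℕ} {ψ₁ ψ₂ : ℕ → ℕ}
    (h₁ : IsAssignment E₁ G₁ m ψ₁) (h₂ : IsAssignment E₂ G₂ m ψ₂) (hE : Disjoint E₁ E₂)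
    (hG : Disjoint G₁ G₂) : {x ∈ E₁ ∪ E₂ | (ψ₁ + ψ₂) x ∈ G₂} = E₂ := by
  ext x
  rw [mem_filter, mem_union]
  by_cases hx : x ∈ E₂
  · simp [hx, h₁.eq_zero x (disjoint_right.1 hE hx), h₂.mem x hx]
  · simp only [hx, or_false, iff_false, not_and]
    intro hx₁
    rw [Pi.add_apply, h₂.eq_zero x hx, add_zero]
    exact disjoint_left.1 hG (h₁.mem x hx₁)

end IsAssignment

theorem assignments_eq_of_subset {G' : Finset ℕ} (hG : G' ⊆ G) (hm : ∀ i ∈ G \ G', m i = 0) :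
    assignments E G' m = assignments E G m := by
  ext φ
  simp only [mem_assignments]
  constructor
  · intro hφ
    refine ⟨hφ.eq_zero, fun x hx => hG (hφ.mem x hx), fun i hi => ?_⟩
    by_cases hi' : i ∈ G'
    · exact hφ.card_fiber i hi'
    · rw [hm i (mem_sdiff.2 ⟨hi, hi'⟩), card_eq_zero, filter_eq_empty_iff]
      rintro x hx rfl
      exact hi' (hφ.mem x hx)
  · intro hφ
    have hmem : ∀ x ∈ E, φ x ∈ G' := fun x hx => by
      by_contra hx'
      exact (hφ.pos_apply hx).ne' (hm _ (mem_sdiff.2 ⟨hφ.mem x hx, hx'⟩))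
    exact ⟨hφ.eq_zero, hmem, fun i hi => hφ.card_fiber i (hG hi)⟩

theorem card_filter_assignments_eq_sum (he : e ∈ E) (p q : (ℕ → ℕ) → Prop) [DecidablePred p]
    [DecidablePred q]
    (hpq : ∀ φ ∈ assignments E G m, p φ → q (update φ e 0))
    (hqp : ∀ i ∈ G, 0 < m i → ∀ ψ ∈ assignments (E.erase e) G (update m i (m i - 1)), q ψ →
      p (update ψ e i)) :
    #{φ ∈ assignments E G m | p φ} =
      ∑ i ∈ G with 0 < m i, #{ψ ∈ assignments (E.erase e) G (update m i (m i - 1)) | q ψ} := by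
  rw [card_eq_sum_card_fiberwise (f := fun φ => φ e) (t := {i ∈ G | 0 < m i}) fun φ hφ => by
    simp only [mem_coe, mem_filter, mem_assignments] at hφ ⊢
    exact ⟨hφ.1.mem e he, hφ.1.pos_apply he⟩]
  refine sum_congr rfl fun i hi => ?_
  obtain ⟨hiG, hmi⟩ := mem_filter.1 hi
  apply card_nbij' (fun φ => update φ e 0) (fun ψ => update ψ e i)
  · intro φ hφ
    simp only [mem_coe, mem_filter, mem_assignments] at hφ ⊢
    obtain ⟨⟨hφ, hp⟩, rfl⟩ := hφ
    exact ⟨hφ.erase he, hpq φ (mem_assignments.2 hφ) hp⟩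
  · intro ψ hψ
    simp only [mem_coe, mem_filter, mem_assignments] at hψ ⊢
    exact ⟨⟨hψ.1.update he hiG hmi, hqp i hiG hmi ψ (mem_assignments.2 hψ.1) hψ.2⟩,
      update_self e i ψ⟩
  · intro φ hφ
    simp only [mem_coe, mem_filter] at hφ
    simp only [update_idem, ← hφ.2, update_eq_self]
  · intro ψ hψ
    simp only [mem_coe, mem_filter, mem_assignments] at hψ
    simp only [update_idem, ← hψ.1.eq_zero e (notMem_erase e E), update_eq_self]

theorem card_assignments (h : ∑ i ∈ G, m i = #E) :
    #(assignments E G m) = Nat.multinomial G m := by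
  induction E using Finset.induction_on generalizing m with
  | empty =>
    have hm : ∀ i ∈ G, m i = 0 := sum_eq_zero_iff.1 h
    rw [Nat.multinomial, h, prod_congr rfl fun i hi => by rw [hm i hi], card_empty,
      Nat.factorial_zero, prod_const_one, Nat.div_one, card_eq_one]
    refine ⟨0, eq_singleton_iff_unique_mem.2 ⟨mem_assignments.2 ⟨fun _ _ => rfl, by simp,
      fun i hi => by simp [hm i hi]⟩, fun φ hφ => funext fun x => ?_⟩⟩
    exact (mem_assignments.1 hφ).eq_zero x (notMem_empty x)
  | insert e E heE ih =>
    have hstep := card_filter_assignments_eq_sum (mem_insert_self e E) (G := G) (m := m)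
      (fun _ => True) (fun _ => True) (fun _ _ _ => trivial) (fun _ _ _ _ _ _ => trivial)
    simp only [filter_true, erase_insert heE] at hstep
    rw [card_insert_of_notMem heE] at h
    rw [hstep, Nat.multinomial_eq_sum_update_pred (by omega)]
    refine sum_congr rfl fun i hi => ih ?_
    have := sum_update_pred_add_one (mem_filter.1 hi).1 (mem_filter.1 hi).2
    omega

theorem piecewise_add_of_eq_zero {D : Finset ℕ} {ψ₁ ψ₂ : ℕ → ℕ} (h₁ : ∀ x ∉ D, ψ₁ x = 0)
    (h₂ : ∀ x ∈ D, ψ₂ x = 0) : D.piecewise (ψ₁ + ψ₂) 0 = ψ₁ := by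
  funext x
  by_cases hx : x ∈ D <;> simp [hx, h₁, h₂]

theorem piecewise_sdiff_add_piecewise {E₂ : Finset ℕ} (hφ : ∀ x ∉ E, φ x = 0) :
    (E \ E₂).piecewise φ 0 + E₂.piecewise φ 0 = φ := by
  funext x
  by_cases hx : x ∈ E₂
  · simp [hx]
  · by_cases hxE : x ∈ E <;> simp [hx, hxE, hφ]

/-- The bijection is restriction to the two preimages, with inverse `(ψ₁, ψ₂) ↦ ψ₁ + ψ₂`. -/
theorem card_filter_assignments_union {G₁ G₂ E₂ : Finset ℕ} (hG : Disjoint G₁ G₂) (hE : E₂ ⊆ E)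
    (p : (ℕ → ℕ) → Prop) [DecidablePred p] :
    #{φ ∈ assignments E (G₁ ∪ G₂) m | {x ∈ E | φ x ∈ G₂} = E₂ ∧ p ((E \ E₂).piecewise φ 0)} =
      #{ψ ∈ assignments (E \ E₂) G₁ m | p ψ} * #(assignments E₂ G₂ m) := by
  rw [← card_product]
  refine card_nbij' (fun φ => ((E \ E₂).piecewise φ 0, E₂.piecewise φ 0)) (fun ψ => ψ.1 + ψ.2)
    (fun φ hφ => ?_) (fun ψ hψ => ?_) (fun φ hφ => ?_) fun ψ hψ => ?_
  · simp only [mem_coe, mem_filter, mem_product, mem_assignments] at hφ ⊢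
    obtain ⟨hφ, rfl, hp⟩ := hφ
    refine ⟨⟨hφ.piecewise sdiff_subset subset_union_left fun x hx => ?_, hp⟩,
      hφ.piecewise (filter_subset _ _) subset_union_right fun x hx => by simp [hx]⟩
    have := hφ.mem x hx
    simp only [mem_sdiff, hx, mem_filter, true_and, mem_union] at this ⊢
    exact ⟨this.resolve_right, fun h₁ h₂ => disjoint_left.1 hG h₁ h₂⟩
  · simp only [mem_coe, mem_filter, mem_product, mem_assignments] at hψ ⊢
    obtain ⟨⟨h₁, hp⟩, h₂⟩ := hψ
    have hψ := h₁.add h₂ sdiff_disjoint hG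
    have hB := h₁.filter_add_mem_eq h₂ sdiff_disjoint hG
    rw [sdiff_union_of_subset hE] at hψ hB
    refine ⟨hψ, hB, ?_⟩
    rwa [piecewise_add_of_eq_zero h₁.eq_zero fun x hx => h₂.eq_zero x (mem_sdiff.1 hx).2]
  · simp only [mem_coe, mem_filter, mem_assignments] at hφ
    exact piecewise_sdiff_add_piecewise hφ.1.eq_zero
  · simp only [mem_coe, mem_filter, mem_product, mem_assignments] at hψ
    obtain ⟨⟨h₁, -⟩, h₂⟩ := hψ
    refine Prod.ext (piecewise_add_of_eq_zero h₁.eq_zero fun x hx => h₂.eq_zero x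
      (mem_sdiff.1 hx).2) ?_
    change E₂.piecewise (ψ.1 + ψ.2) 0 = ψ.2
    rw [add_comm]
    exact piecewise_add_of_eq_zero h₂.eq_zero fun x hx => h₁.eq_zero x fun h => (mem_sdiff.1 h).2 hx

end Assignments

section Trees

variable {E F : Finset ℕ} {m φ ψ : ℕ → ℕ} {e : ℕ}

noncomputable def treeAssignments (E F : Finset ℕ) (m : ℕ → ℕ) : Finset (ℕ → ℕ) :=
  {φ ∈ assignments E F m | ∀ j ∈ F.erase 1, ReachesOne φ j}

theorem forall_reachesOne_of_eqOn (hφ : ∀ x ∈ F.erase 1, φ x ∈ F)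
    (heq : ∀ x ∈ F.erase 1, ψ x = φ x) (h : ∀ j ∈ F.erase 1, ReachesOne φ j) :
    ∀ j ∈ F.erase 1, ReachesOne ψ j := fun j hj =>
  (h j hj).congr (S := F) (fun x hx hx1 => hφ x (mem_erase.2 ⟨hx1, hx⟩))
    (fun x hx hx1 => heq x (mem_erase.2 ⟨hx1, hx⟩)) (mem_of_mem_erase hj)

theorem forall_reachesOne_update (he : e ∉ F.erase 1) (hφ : ∀ x ∈ F.erase 1, φ x ∈ F)
    (h : ∀ j ∈ F.erase 1, ReachesOne φ j) (a : ℕ) :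
    ∀ j ∈ F.erase 1, ReachesOne (update φ e a) j :=
  forall_reachesOne_of_eqOn hφ (fun _ hx => update_of_ne (ne_of_mem_of_not_mem hx he) _ _) h

theorem treeAssignments_eq_empty (h1 : 1 ∈ F) (hF : F ≠ {1}) (hFE : F.erase 1 ⊆ E)
    (hm1 : m 1 = 0) : treeAssignments E F m = ∅ := by
  refine eq_empty_of_forall_notMem fun φ hφ => ?_
  obtain ⟨hφ, hreach⟩ := mem_filter.1 hφ
  replace hφ := mem_assignments.1 hφ
  obtain ⟨j, hj⟩ := (erase_nonempty h1).2 ((nontrivial_iff_ne_singleton h1).2 hF)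
  -- no element is sent to `1`, so the non-root vertices never leave `F.erase 1`
  refine not_reachesOne_of_mapsTo (C := F.erase 1) (fun x hx => ?_) (notMem_erase 1 F) hj
    (hreach j hj)
  have hx : x ∈ E := hFE hx
  exact mem_erase.2 ⟨fun hx1 => (hφ.pos_apply hx).ne' (hx1 ▸ hm1), hφ.mem x hx⟩

theorem card_treeAssignments_erase_of_notMem (he : e ∈ E) (heF : e ∉ F.erase 1)
    (hFE : F.erase 1 ⊆ E) :
    #(treeAssignments E F m) =
      ∑ i ∈ F with 0 < m i, #(treeAssignments (E.erase e) F (update m i (m i - 1))) := by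
  simp only [treeAssignments]
  refine card_filter_assignments_eq_sum he _ _ (fun φ hφ h => ?_) fun i _ _ ψ hψ h => ?_
  · exact forall_reachesOne_update heF
      (fun x hx => (mem_assignments.1 hφ).mem x (hFE hx)) h 0
  · exact forall_reachesOne_update heF (fun x hx => (mem_assignments.1 hψ).mem x
      (mem_erase.2 ⟨fun hxe => heF (hxe ▸ hx), hFE hx⟩)) h i

theorem card_treeAssignments_erase_of_eq_zero (heF : e ∈ F.erase 1) (hme : m e = 0)
    (hFE : F.erase 1 ⊆ E) :
    #(treeAssignments E F m) = ∑ i ∈ F.erase e with 0 < m i,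
      #(treeAssignments (E.erase e) (F.erase e) (update m i (m i - 1))) := by
  have heF' : e ∉ (F.erase e).erase 1 := fun h => notMem_erase e F (mem_of_mem_erase h)
  have hsub : (F.erase e).erase 1 ⊆ F.erase 1 := erase_subset_erase 1 (erase_subset e F)
  simp only [treeAssignments]
  rw [← assignments_eq_of_subset (erase_subset e F) fun i hi => by
    rw [mem_sdiff, mem_erase] at hi
    rw [show i = e by tauto, hme]]
  refine card_filter_assignments_eq_sum (hFE heF) _ _ (fun φ hφ h => ?_) fun i hi _ ψ hψ h => ?_
  · exact forall_reachesOne_update heF'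
      (fun x hx => (mem_assignments.1 hφ).mem x (hFE (hsub hx))) (fun j hj => h j (hsub hj)) 0
  · have hψ' : ∀ j ∈ (F.erase e).erase 1, ReachesOne (update ψ e i) j :=
      forall_reachesOne_update heF' (fun x hx => (mem_assignments.1 hψ).mem x
        (mem_erase.2 ⟨fun hxe => heF' (hxe ▸ hx), hFE (hsub hx)⟩)) h i
    intro j hj
    by_cases hje : j = e
    · subst hje
      refine ReachesOne.of_apply ?_
      rw [update_self]
      by_cases hi1 : i = 1
      · exact hi1 ▸ reachesOne_one _
      · exact hψ' i (mem_erase.2 ⟨hi1, hi⟩)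
    · exact hψ' j (mem_erase.2 ⟨ne_of_mem_erase hj, mem_erase.2 ⟨hje, mem_of_mem_erase hj⟩⟩)

theorem card_treeAssignments_singleton (h : ∑ i ∈ {1}, m i = #E) :
    #(treeAssignments E {1} m) = 1 := by
  rw [treeAssignments, erase_singleton]
  simp only [notMem_empty, IsEmpty.forall_iff, forall_const, filter_true]
  rw [card_assignments h, Nat.multinomial_singleton]

theorem eq_singleton_of_erase_subset_empty (h1 : 1 ∈ F) (hF : F.erase 1 ⊆ ∅) : F = {1} :=
  ((erase_eq_empty_iff F 1).1 (subset_empty.1 hF)).resolve_left (ne_empty_of_mem h1)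

theorem exists_card_treeAssignments_eq_sum (h1 : 1 ∈ F) (hFE : F.erase 1 ⊆ E)
    (hsum : ∑ i ∈ F, m i = #E) (hm1 : 0 < m 1) :
    ∃ e ∈ E, ∃ F' ⊆ F, 1 ∈ F' ∧ F'.erase 1 ⊆ E.erase e ∧ (∀ i ∈ F \ F', m i = 0) ∧
      #(treeAssignments E F m) = ∑ i ∈ F' with 0 < m i,
        #(treeAssignments (E.erase e) F' (update m i (m i - 1))) := by
  by_cases hfree : ∃ e ∈ E, e ∉ F.erase 1
  · obtain ⟨e, he, heF⟩ := hfree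
    exact ⟨e, he, F, subset_rfl, h1, fun x hx => mem_erase.2 ⟨fun hxe => heF (hxe ▸ hx), hFE hx⟩,
      by simp, card_treeAssignments_erase_of_notMem he heF hFE⟩
  push Not at hfree
  have hE : E = F.erase 1 := subset_antisymm hfree hFE
  -- the non-root vertices have only `#E - m 1 < #E` preimages, so one of them is a leaf
  obtain ⟨e, heF, hme⟩ : ∃ e ∈ F.erase 1, m e = 0 := by
    by_contra! h
    have : #(F.erase 1) ≤ ∑ i ∈ F.erase 1, m i := by
      simpa using card_nsmul_le_sum (F.erase 1) m 1 fun i hi => Nat.one_le_iff_ne_zero.2 (h i hi)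
    rw [← add_sum_erase F m h1, hE] at hsum
    omega
  refine ⟨e, hE ▸ heF, F.erase e, erase_subset e F,
    mem_erase.2 ⟨(ne_of_mem_erase heF).symm, h1⟩, ?_, fun i hi => ?_,
    card_treeAssignments_erase_of_eq_zero heF hme hFE⟩
  · rw [hE, erase_right_comm]
  · rw [mem_sdiff, mem_erase] at hi
    rw [show i = e by tauto, hme]

theorem sum_card_treeAssignments_update_pred (h1 : 1 ∈ F) (hsum : ∑ i ∈ F, m i = #E + 1)
    (hE : E.Nonempty) (hm1 : 0 < m 1) (hFE : F.erase 1 ⊆ E)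
    (ih : ∀ m' : ℕ → ℕ, ∑ i ∈ F, m' i = #E → 0 < m' 1 →
      #(treeAssignments E F m') = Nat.multinomial F (update m' 1 (m' 1 - 1))) :
    ∑ i ∈ F with 0 < m i, #(treeAssignments E F (update m i (m i - 1))) =
      Nat.multinomial F (update m 1 (m 1 - 1)) := by
  set g := update m 1 (m 1 - 1) with hg
  have hgsum : ∑ i ∈ F, g i = #E := by
    have := sum_update_pred_add_one h1 hm1
    rw [← hg] at this
    omega
  have hgm : ∀ i, 0 < g i → 0 < m i := fun i hi => by
    rw [hg, update_apply] at hi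
    split_ifs at hi with h <;> [rw [h]; skip] <;> omega
  rw [Nat.multinomial_eq_sum_update_pred (hgsum ▸ hE.card_pos)]
  symm
  refine sum_subset_zero_on_sdiff (fun i hi => ?_) (fun i hi => ?_) fun i hi => ?_
  · rw [mem_filter] at hi ⊢
    exact ⟨hi.1, hgm i hi.2⟩
  · -- only the root can lose its last preimage, and then no vertex reaches it
    rw [mem_sdiff, mem_filter, mem_filter] at hi
    obtain rfl : i = 1 := by
      by_contra h
      exact hi.2 ⟨hi.1.1, by rw [hg, update_of_ne h]; exact hi.1.2⟩
    have hm11 : m 1 = 1 := by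
      have : ¬ 0 < m 1 - 1 := fun h => hi.2 ⟨h1, by rwa [hg, update_self]⟩
      omega
    have hF : F ≠ {1} := fun h => by simp [h, hm11] at hsum; simp [hsum] at hE
    rw [treeAssignments_eq_empty h1 hF hFE (by rw [update_self, hm11]), card_empty]
  · rw [mem_filter] at hi
    have hm1i : 0 < update m i (m i - 1) 1 := by
      rcases eq_or_ne i 1 with rfl | hi1
      · rw [update_self]; exact hi.2
      · rwa [update_of_ne hi1.symm]
    have := sum_update_pred_add_one hi.1 (hgm i hi.2)
    rw [ih _ (by omega) hm1i, hg, update_pred_comm]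

theorem card_treeAssignments (h1 : 1 ∈ F) (hFE : F.erase 1 ⊆ E) (hsum : ∑ i ∈ F, m i = #E)
    (hm1 : 0 < m 1 ∨ E = ∅) :
    #(treeAssignments E F m) = Nat.multinomial F (update m 1 (m 1 - 1)) := by
  obtain ⟨n, hn⟩ : ∃ n, #E = n := ⟨_, rfl⟩
  induction n generalizing E F m with
  | zero =>
    obtain rfl := eq_singleton_of_erase_subset_empty h1 (card_eq_zero.1 hn ▸ hFE)
    rw [card_treeAssignments_singleton hsum, Nat.multinomial_singleton]
  | succ n ih =>
    by_cases hF : F = {1}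
    · subst hF
      rw [card_treeAssignments_singleton hsum, Nat.multinomial_singleton]
    have hm1 : 0 < m 1 := hm1.resolve_right fun h => by simp [h] at hn
    obtain ⟨e, he, F', hF'F, h1F', hF'E, hm0, hstep⟩ :=
      exists_card_treeAssignments_eq_sum h1 hFE hsum hm1
    have hE' : #(E.erase e) = n := by rw [card_erase_of_mem he, hn, Nat.add_sub_cancel]
    have hsum' : ∑ i ∈ F', m i = #(E.erase e) + 1 := by
      rw [hE', ← hn, ← hsum]
      exact sum_subset hF'F fun i hi hi' => hm0 i (mem_sdiff.2 ⟨hi, hi'⟩)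
    rw [hstep, ← Nat.multinomial_congr_of_sdiff (f := update m 1 (m 1 - 1)) hF'F (fun i hi => by
      rw [update_of_ne (by rintro rfl; exact (mem_sdiff.1 hi).2 h1F'), hm0 i hi]) fun _ _ => rfl]
    rcases (E.erase e).eq_empty_or_nonempty with hE0 | hE0
    · obtain rfl := eq_singleton_of_erase_subset_empty h1F' (hE0 ▸ hF'E)
      rw [sum_singleton, hE0, card_empty] at hsum'
      rw [filter_singleton, if_pos hm1, sum_singleton, Nat.multinomial_singleton]
      exact card_treeAssignments_singleton (by rw [sum_singleton, update_self, hsum', hE0]; rfl)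
    exact sum_card_treeAssignments_update_pred h1F' hsum' hE0 hm1 hF'E
      fun m' hs hm' => ih h1F' hF'E hs (Or.inl hm') hE'

end Trees

section ReachSets

variable {N R F : Finset ℕ} {m φ : ℕ → ℕ}

/-- Via `toPartition`, these are the assignments whose reachable set is `F`
(`isReachSet_toPartition_iff`). -/
noncomputable def reachAssignments (N R F : Finset ℕ) (m : ℕ → ℕ) : Finset (ℕ → ℕ) :=
  {φ ∈ assignments N R m | (∀ j ∈ F.erase 1, ReachesOne φ j) ∧ ∀ j ∈ R \ F, φ j ∉ F}

theorem reachAssignments_subset : reachAssignments N R F m ⊆ assignments N R m :=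
  filter_subset _ _

theorem sdiff_subset_erase_of_mem (h1F : 1 ∈ F) : R \ F ⊆ R.erase 1 := fun _ hx =>
  mem_erase.2 ⟨fun h => (mem_sdiff.1 hx).2 (h ▸ h1F), (mem_sdiff.1 hx).1⟩

theorem sdiff_subset_filter_apply_mem (hφ : IsAssignment N R m φ) (hRN : R.erase 1 ⊆ N)
    (h1F : 1 ∈ F) (hout : ∀ j ∈ R \ F, φ j ∉ F) : R \ F ⊆ {x ∈ N | φ x ∈ R \ F} := fun x hx =>
  have hxN := hRN (sdiff_subset_erase_of_mem h1F hx)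
  mem_filter.2 ⟨hxN, mem_sdiff.2 ⟨hφ.mem x hxN, hout x hx⟩⟩

/-- Vertices outside `F` only point outside `F`, so they cannot reach `1`. -/
theorem apply_mem_of_reachesOne (hφ : IsAssignment N R m φ) (hRN : R.erase 1 ⊆ N)
    (hFR : F ⊆ R) (h1F : 1 ∈ F) (hout : ∀ j ∈ R \ F, φ j ∉ F) {j : ℕ} (hj : j ∈ F.erase 1)
    (hreach : ReachesOne φ j) : φ j ∈ F := by
  by_contra hjF
  have hjN : j ∈ N := hRN (erase_subset_erase 1 hFR hj)
  refine not_reachesOne_of_mapsTo (C := ((R \ F : Finset ℕ) : Set ℕ)) (fun x hx => ?_)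
    (fun h => (mem_sdiff.1 h).2 h1F) (mem_sdiff.2 ⟨hφ.mem j hjN, hjF⟩)
    (hreach.apply (ne_of_mem_erase hj))
  exact (mem_filter.1 (sdiff_subset_filter_apply_mem hφ hRN h1F hout hx)).2

theorem forall_reachesOne_iff_piecewise (hφ : IsAssignment N R m φ) {B : Finset ℕ}
    (hB : {x ∈ N | φ x ∈ R \ F} = B) (hFB : F.erase 1 ⊆ N \ B) :
    (∀ j ∈ F.erase 1, ReachesOne φ j) ↔
      ∀ j ∈ F.erase 1, ReachesOne ((N \ B).piecewise φ 0) j := by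
  have hmaps : ∀ x ∈ F.erase 1, φ x ∈ F := fun x hx => by
    have hx' := hFB hx
    rw [mem_sdiff, ← hB, mem_filter] at hx'
    by_contra h
    exact hx'.2 ⟨hx'.1, mem_sdiff.2 ⟨hφ.mem x hx'.1, h⟩⟩
  have heq : ∀ x ∈ F.erase 1, (N \ B).piecewise φ 0 x = φ x := fun x hx =>
    piecewise_eq_of_mem _ _ _ (hFB hx)
  exact ⟨forall_reachesOne_of_eqOn hmaps heq, forall_reachesOne_of_eqOn
    (fun x hx => (heq x hx).symm ▸ hmaps x hx) fun x hx => (heq x hx).symm⟩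

theorem card_filter_reachAssignments_eq (hRN : R.erase 1 ⊆ N) (hFR : F ⊆ R) (h1F : 1 ∈ F)
    (hsum : ∑ i ∈ R, m i = #N) (hm1 : 0 < m 1) {A : Finset ℕ} (hA : A ⊆ N \ R.erase 1)
    (hAcard : #A + #(R \ F) = ∑ i ∈ R \ F, m i) :
    #{φ ∈ reachAssignments N R F m | {x ∈ N | φ x ∈ R \ F} \ (R \ F) = A} =
      Nat.multinomial F (update m 1 (m 1 - 1)) * Nat.multinomial (R \ F) m := by
  have hFcR := sdiff_subset_erase_of_mem (R := R) h1F
  have hAFc : Disjoint A (R \ F) :=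
    disjoint_of_subset_left hA (disjoint_of_subset_right hFcR sdiff_disjoint)
  have hBN : A ∪ R \ F ⊆ N := union_subset (hA.trans sdiff_subset) (hFcR.trans hRN)
  have hVB : F.erase 1 ⊆ N \ (A ∪ R \ F) := fun x hx => by
    have hxR := erase_subset_erase 1 hFR hx
    refine mem_sdiff.2 ⟨hRN hxR, fun hxB => ?_⟩
    rcases mem_union.1 hxB with hxA | hxFc
    · exact (mem_sdiff.1 (hA hxA)).2 hxR
    · exact (mem_sdiff.1 hxFc).2 (mem_of_mem_erase hx)
  have hglue := card_filter_assignments_union (E := N) (m := m)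
    (disjoint_sdiff : Disjoint F (R \ F)) hBN (fun ψ => ∀ j ∈ F.erase 1, ReachesOne ψ j)
  rw [union_sdiff_of_subset hFR] at hglue
  have hcard : #(A ∪ R \ F) = ∑ i ∈ R \ F, m i := by rw [card_union_of_disjoint hAFc, hAcard]
  have hsumF : ∑ i ∈ F, m i = #(N \ (A ∪ R \ F)) := by
    rw [card_sdiff_of_subset hBN, hcard, ← hsum, ← sum_sdiff hFR]
    omega
  rw [← card_treeAssignments h1F hVB hsumF (Or.inl hm1), ← card_assignments hcard.symm,
    treeAssignments, ← hglue]
  refine congrArg card (ext fun φ => ?_)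
  simp only [reachAssignments, mem_filter, mem_assignments]
  constructor
  · rintro ⟨⟨hφ, htree, hout⟩, rfl⟩
    have hB : {x ∈ N | φ x ∈ R \ F} = {x ∈ N | φ x ∈ R \ F} \ (R \ F) ∪ R \ F :=
      (sdiff_union_of_subset (sdiff_subset_filter_apply_mem hφ hRN h1F hout)).symm
    exact ⟨hφ, hB, (forall_reachesOne_iff_piecewise hφ hB hVB).1 htree⟩
  · rintro ⟨hφ, hB, htree⟩
    refine ⟨⟨hφ, (forall_reachesOne_iff_piecewise hφ hB hVB).2 htree, fun j hj => ?_⟩,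
      by rw [hB, union_sdiff_cancel_right hAFc]⟩
    have hj' : j ∈ {x ∈ N | φ x ∈ R \ F} := hB ▸ mem_union_right A hj
    exact (mem_sdiff.1 (mem_filter.1 hj').2).2

theorem card_reachAssignments (hRN : R.erase 1 ⊆ N) (hFR : F ⊆ R) (h1F : 1 ∈ F)
    (hsum : ∑ i ∈ R, m i = #N) (hm : ∀ i ∈ R, 0 < m i) :
    #(reachAssignments N R F m) = (#(N \ R.erase 1)).choose (∑ i ∈ R \ F, m i - #(R \ F)) *
        (Nat.multinomial F (update m 1 (m 1 - 1)) * Nat.multinomial (R \ F) m) := by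
  have hFc : #(R \ F) ≤ ∑ i ∈ R \ F, m i := by
    simpa using card_nsmul_le_sum (R \ F) m 1 fun i hi => hm i (mem_sdiff.1 hi).1
  rw [card_eq_sum_card_fiberwise (f := fun φ => {x ∈ N | φ x ∈ R \ F} \ (R \ F))
    (t := (N \ R.erase 1).powersetCard (∑ i ∈ R \ F, m i - #(R \ F))) fun φ hφ => ?_,
    sum_const_nat fun A hA => card_filter_reachAssignments_eq hRN hFR h1F hsum (hm 1 (hFR h1F))
      (mem_powersetCard.1 hA).1 (by rw [(mem_powersetCard.1 hA).2]; omega), card_powersetCard]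
  simp only [reachAssignments, mem_coe, mem_filter, mem_assignments] at hφ
  obtain ⟨hφ, htree, hout⟩ := hφ
  have hsub := sdiff_subset_filter_apply_mem hφ hRN h1F hout
  rw [mem_coe, mem_powersetCard, card_sdiff_of_subset hsub, hφ.card_filter_mem sdiff_subset]
  refine ⟨fun x hx => ?_, rfl⟩
  rw [mem_sdiff, mem_filter] at hx
  refine mem_sdiff.2 ⟨hx.1.1, fun hxR => ?_⟩
  have hxF : x ∈ F.erase 1 := mem_erase.2 ⟨ne_of_mem_erase hxR,
    by_contra fun h => hx.2 (mem_sdiff.2 ⟨mem_of_mem_erase hxR, h⟩)⟩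
  exact (mem_sdiff.1 hx.1.2).2 (apply_mem_of_reachesOne hφ hRN hFR h1F hout hxF (htree x hxF))

end ReachSets

section OrderedPartitions

variable {r s : ℕ} {m φ : ℕ → ℕ} {P : ℕ → Finset ℕ}

def toPartition (s : ℕ) (φ : ℕ → ℕ) (i : ℕ) : Finset ℕ := {x ∈ Icc 1 s | φ x = i}

theorem isOrderedPartition_toPartition (hφ : IsAssignment (Icc 1 s) (Icc 1 r) m φ) :
    IsOrderedPartition r s m (toPartition s φ) := by
  refine ⟨fun i hi => filter_false_of_mem fun x hx h => hi (h ▸ hφ.mem x hx),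
    fun i j hij => disjoint_filter.2 fun x _ hi hj => hij (hi ▸ hj), ext fun x => ?_,
    hφ.card_fiber⟩
  simp only [toPartition, mem_biUnion, mem_filter]
  exact ⟨fun ⟨_, _, hx, _⟩ => hx, fun hx => ⟨φ x, hφ.mem x hx, hx, rfl⟩⟩

theorem toPartition_injOn (G : Finset ℕ) :
    Set.InjOn (toPartition s) (assignments (Icc 1 s) G m) := by
  intro φ hφ ψ hψ h
  funext x
  by_cases hx : x ∈ Icc 1 s
  · have : x ∈ toPartition s ψ (φ x) := h ▸ mem_filter.2 ⟨hx, rfl⟩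
    exact (mem_filter.1 this).2.symm
  · rw [(mem_assignments.1 hφ).eq_zero x hx, (mem_assignments.1 hψ).eq_zero x hx]

theorem exists_assignment_toPartition_eq (hP : IsOrderedPartition r s m P) :
    ∃ φ, IsAssignment (Icc 1 s) (Icc 1 r) m φ ∧ toPartition s φ = P := by
  obtain ⟨hPout, hPdisj, hPunion, hPcard⟩ := hP
  -- the index of the block containing `x`, or `0` if there is none
  set φ : ℕ → ℕ := fun x => ∑ i ∈ Icc 1 r, if x ∈ P i then i else 0
  have hφ : ∀ i ∈ Icc 1 r, ∀ x ∈ P i, φ x = i := fun i hi x hx => by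
    change ∑ j ∈ Icc 1 r, (if x ∈ P j then j else 0) = i
    rw [sum_eq_single_of_mem i hi fun j _ hji => if_neg fun hxj =>
      disjoint_left.1 (hPdisj j i hji) hxj hx, if_pos hx]
  have hmem : ∀ x ∈ Icc 1 s, ∃ i ∈ Icc 1 r, x ∈ P i := fun x hx =>
    mem_biUnion.1 (hPunion ▸ hx)
  have hP : toPartition s φ = P := funext fun i => ext fun x => by
    rw [toPartition, mem_filter]
    constructor
    · rintro ⟨hx, rfl⟩
      obtain ⟨j, hj, hxj⟩ := hmem x hx
      rwa [hφ j hj x hxj]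
    · intro hx
      have hi : i ∈ Icc 1 r := by_contra fun hi => by simp [hPout i hi] at hx
      exact ⟨hPunion ▸ mem_biUnion.2 ⟨i, hi, hx⟩, hφ i hi x hx⟩
  refine ⟨φ, ⟨fun x hx => sum_eq_zero fun i hi => if_neg fun hxi =>
    hx (hPunion ▸ mem_biUnion.2 ⟨i, hi, hxi⟩), fun x hx => ?_, fun i hi => ?_⟩, hP⟩
  · obtain ⟨i, hi, hxi⟩ := hmem x hx
    rwa [hφ i hi x hxi]
  · rw [← hPcard i hi, ← hP]
    rfl

theorem arcClosed_toPartition_iff (hrs : r ≤ s) {F : Finset ℕ} :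
    ArcClosed r (toPartition s φ) F ↔ ∀ j, 2 ≤ j → j ≤ r → φ j ∈ F → j ∈ F := by
  simp only [ArcClosed, toPartition, mem_filter, mem_Icc]
  constructor
  · exact fun h j hj2 hjr hφj => h (φ j) hφj j ⟨⟨by omega, by omega⟩, rfl⟩ hj2 hjr
  · rintro h i hi j ⟨-, rfl⟩ hj2 hjr
    exact h j hj2 hjr hi

theorem mem_of_reachesOne (hφ : IsAssignment (Icc 1 s) (Icc 1 r) m φ) (hrs : r ≤ s)
    {F : Finset ℕ} (h1F : 1 ∈ F) (hF : ∀ j, 2 ≤ j → j ≤ r → φ j ∈ F → j ∈ F) {j : ℕ}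
    (hj : j ∈ Icc 1 r) (hreach : ReachesOne φ j) : j ∈ F := by
  obtain ⟨k, hk⟩ := hreach
  induction k generalizing j with
  | zero => exact (show j = 1 from hk) ▸ h1F
  | succ k ih =>
    rw [mem_Icc] at hj
    rcases eq_or_ne j 1 with rfl | hj1
    · exact h1F
    have hφj := hφ.mem j (mem_Icc.2 ⟨hj.1, hj.2.trans hrs⟩)
    exact hF j (by omega) hj.2 (ih hφj (by rwa [iterate_succ_apply] at hk))

theorem isReachSet_toPartition_iff (hφ : IsAssignment (Icc 1 s) (Icc 1 r) m φ) (hrs : r ≤ s)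
    {F : Finset ℕ} (hF : F ⊆ Icc 1 r) (h1F : 1 ∈ F) :
    IsReachSet r (toPartition s φ) F ↔
      (∀ j ∈ F.erase 1, ReachesOne φ j) ∧ ∀ j ∈ Icc 1 r \ F, φ j ∉ F := by
  simp only [IsReachSet, arcClosed_toPartition_iff hrs, h1F, true_and]
  constructor
  · rintro ⟨hclosed, hmin⟩
    have hreach := hmin {j ∈ Icc 1 r | ReachesOne φ j} (mem_filter.2 ⟨hF h1F, reachesOne_one φ⟩)
      fun j hj2 hjr hφj => mem_filter.2 ⟨mem_Icc.2 ⟨by omega, hjr⟩, (mem_filter.1 hφj).2.of_apply⟩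
    refine ⟨fun j hj => (mem_filter.1 (hreach (mem_of_mem_erase hj))).2, fun j hj hφj => ?_⟩
    obtain ⟨hjr, hjF⟩ := mem_sdiff.1 hj
    rw [mem_Icc] at hjr
    exact hjF (hclosed j (by rcases eq_or_ne j 1 with rfl | _ <;> [exact absurd h1F hjF; omega])
      hjr.2 hφj)
  · rintro ⟨hreach, hout⟩
    have hclosed : ∀ j, 2 ≤ j → j ≤ r → φ j ∈ F → j ∈ F := fun j hj2 hjr hφj =>
      by_contra fun hjF => hout j (mem_sdiff.2 ⟨mem_Icc.2 ⟨by omega, hjr⟩, hjF⟩) hφj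
    refine ⟨hclosed, fun F' h1F' hF' j hj => ?_⟩
    rcases eq_or_ne j 1 with rfl | hj1
    · exact h1F'
    exact mem_of_reachesOne hφ hrs h1F' hF' (hF hj) (hreach j (mem_erase.2 ⟨hj1, hj⟩))

theorem setOf_isReachSet_eq_image (hrs : r ≤ s) {F : Finset ℕ} (hF : F ⊆ Icc 1 r)
    (h1F : 1 ∈ F) : {P | IsOrderedPartition r s m P ∧ IsReachSet r P F} =
      (reachAssignments (Icc 1 s) (Icc 1 r) F m).image (toPartition s) := by
  ext P
  simp only [Set.mem_ofPred_eq, coe_image, Set.mem_image, mem_coe, reachAssignments, mem_filter,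
    mem_assignments]
  constructor
  · rintro ⟨hP, hreach⟩
    obtain ⟨φ, hφ, rfl⟩ := exists_assignment_toPartition_eq hP
    exact ⟨φ, ⟨hφ, (isReachSet_toPartition_iff hφ hrs hF h1F).1 hreach⟩, rfl⟩
  · rintro ⟨φ, ⟨hφ, hreach⟩, rfl⟩
    exact ⟨isOrderedPartition_toPartition hφ, (isReachSet_toPartition_iff hφ hrs hF h1F).2 hreach⟩

theorem ncard_setOf_isReachSet (hrs : r ≤ s) {F : Finset ℕ} (hF : F ⊆ Icc 1 r) (h1F : 1 ∈ F) :
    {P | IsOrderedPartition r s m P ∧ IsReachSet r P F}.ncard =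
      #(reachAssignments (Icc 1 s) (Icc 1 r) F m) := by
  rw [setOf_isReachSet_eq_image hrs hF h1F, Set.ncard_coe_finset,
    card_image_of_injOn ((toPartition_injOn (Icc 1 r)).mono reachAssignments_subset)]

end OrderedPartitions

end PartitionReach

open PartitionReach

theorem count_partitions_given_reach_general
    (r : ℕ) (m : ℕ → ℕ) (hm : ∀ i ∈ Finset.Icc 1 r, 0 < m i)
    (s : ℕ) (hs : s = ∑ i ∈ Finset.Icc 1 r, m i)
    (g : ℕ → ℕ) (hg1 : g 1 = m 1 - 1) (hg2 : ∀ i, 2 ≤ i → g i = m i)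
    (F : Finset ℕ) (hF : F ⊆ Finset.Icc 1 r) (h1F : 1 ∈ F) :
    {P : ℕ → Finset ℕ | IsOrderedPartition r s m P ∧ IsReachSet r P F}.ncard =
      (s - r + 1).choose
          ((∑ i ∈ Finset.Icc 1 r \ F, g i) - (Finset.Icc 1 r \ F).card) *
        ((∑ i ∈ F, g i).factorial / ∏ i ∈ F, (g i).factorial) *
        ((∑ i ∈ Finset.Icc 1 r \ F, g i).factorial /
          ∏ i ∈ Finset.Icc 1 r \ F, (g i).factorial) := by
  have hr : 1 ≤ r := (mem_Icc.1 (hF h1F)).2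
  have hrs : r ≤ s := by
    simpa [hs] using card_nsmul_le_sum (Icc 1 r) m 1 hm
  have hRN : (Icc 1 r).erase 1 ⊆ Icc 1 s := (erase_subset 1 _).trans (Icc_subset_Icc_right hrs)
  have hfree : #(Icc 1 s \ (Icc 1 r).erase 1) = s - r + 1 := by
    rw [card_sdiff_of_subset hRN, card_erase_of_mem (mem_Icc.2 ⟨le_rfl, hr⟩), Nat.card_Icc,
      Nat.card_Icc]
    omega
  have hgF : ∀ i ∈ F, update m 1 (m 1 - 1) i = g i := fun i hi => by
    rcases eq_or_ne i 1 with rfl | hi1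
    · rw [update_self, hg1]
    · rw [update_of_ne hi1, hg2 i (by have := mem_Icc.1 (hF hi); omega)]
  have hgFc : ∀ i ∈ Icc 1 r \ F, m i = g i := fun i hi => by
    obtain ⟨hir, hiF⟩ := mem_sdiff.1 hi
    have := ne_of_mem_of_not_mem h1F hiF
    exact (hg2 i (by have := mem_Icc.1 hir; omega)).symm
  rw [ncard_setOf_isReachSet hrs hF h1F,
    card_reachAssignments hRN hF h1F (by rw [Nat.card_Icc, hs]; omega) hm, hfree,
    Nat.multinomial_congr hgF, Nat.multinomial_congr hgFc, sum_congr rfl hgFc, mul_assoc]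
  rfl

/-- **Lemma `lem:no_sum`.** For `r ≥ 1`, positive integers `m 1, …, m r` with
`s = m 1 + ⋯ + m r`, `g 1 = m 1 - 1`, `g i = m i` for `2 ≤ i`, and a subset
`F ⊆ {1, …, r}` with `1 ∈ F` and complement `Fᶜ = {1,…,r} \ F`, the number of
ordered partitions of `{1, …, s}` of type `(m 1, …, m r)` with reachable set
`F` equals `choose (s - r + 1) (S(Fᶜ) - |Fᶜ|) * C(F) * C(Fᶜ)`, where
`S(B) = ∑_{i∈B} g i` and `C(B) = S(B)! / ∏_{i∈B} (g i)!`. -/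
theorem count_partitions_given_reach
    (r : ℕ) (hr : 1 ≤ r) (m : ℕ → ℕ) (hm : ∀ i ∈ Finset.Icc 1 r, 0 < m i)
    (s : ℕ) (hs : s = ∑ i ∈ Finset.Icc 1 r, m i)
    (g : ℕ → ℕ) (hg1 : g 1 = m 1 - 1) (hg2 : ∀ i, 2 ≤ i → g i = m i)
    (F : Finset ℕ) (hF : F ⊆ Finset.Icc 1 r) (h1F : 1 ∈ F) :
    {P : ℕ → Finset ℕ | IsOrderedPartition r s m P ∧ IsReachSet r P F}.ncard =
      (s - r + 1).choose
          ((∑ i ∈ Finset.Icc 1 r \ F, g i) - (Finset.Icc 1 r \ F).card) *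
        ((∑ i ∈ F, g i).factorial / ∏ i ∈ F, (g i).factorial) *
        ((∑ i ∈ Finset.Icc 1 r \ F, g i).factorial /
          ∏ i ∈ Finset.Icc 1 r \ F, (g i).factorial) :=
  count_partitions_given_reach_general r m hm s hs g hg1 hg2 F hF h1F
end

section
/- Let r ≥ 1 be an integer and m_1, …, m_r positive integers with s = m_1 + ⋯ + m_r. For every subset F ⊆ {1, …, r} with 1 ∈ F, there exists an ordered partition (P_1, …, P_r) of {1, …, s} of type (m_1, …, m_r) whose reachable set R(P) equals F. (Equivalently, the map sending an ordered partition to its reachable set is a surjection onto the collection of subsets of {1, …, r} containing 1.) -/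
/-!
List `F` as `1 = f₁ < f₂ < ⋯ < f_k` and give every `j ∈ {2, …, r}` a parent: the predecessor of `j`
in `F` if `j ∈ F`, and `j` itself otherwise. Putting each such `j` into the block of its parent, the
arcs form the chain `f₁ → f₂ → ⋯ → f_k` plus loops `j → j` off `F`, so the reachable set is `F`.
Parents are injective, so every block receives at most one of these indices; as `m i ≥ 1`, the
blocks can then be filled up to their prescribed sizes with the remaining elements `1, r + 1, …, s`.
-/

open Finset Function

section Partition

variable {ι α : Type*} [DecidableEq ι] [DecidableEq α]

theorem Finset.subset_biUnion_of_eq_empty_off {I : Finset ι} {C : ι → Finset α}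
    (hC0 : ∀ i ∉ I, C i = ∅) (i : ι) : C i ⊆ I.biUnion C := by
  by_cases hi : i ∈ I
  · exact subset_biUnion_of_mem C hi
  · simp [hC0 i hi]

theorem Finset.exists_partition_of_card_eq_sum (I : Finset ι) (U : Finset α) (c : ι → ℕ)
    (hU : #U = ∑ i ∈ I, c i) :
    ∃ C : ι → Finset α, (∀ i ∉ I, C i = ∅) ∧ Pairwise (Disjoint on C) ∧ I.biUnion C = U ∧
      ∀ i ∈ I, #(C i) = c i := by
  induction I using Finset.induction_on generalizing U with
  | empty =>
    refine ⟨fun _ => ∅, fun _ _ => rfl, fun _ _ _ => disjoint_bot_left, ?_, by simp⟩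
    simpa [eq_comm] using hU
  | insert a I ha ih =>
    rw [sum_insert ha] at hU
    obtain ⟨D, hDU, hD⟩ := exists_subset_card_eq (s := U) (n := c a) (by omega)
    obtain ⟨C, hC0, hCdisj, hCU, hC⟩ := ih (U \ D) (by rw [card_sdiff_of_subset hDU]; omega)
    have hne : ∀ i ∈ I, i ≠ a := fun i hi => ne_of_mem_of_not_mem hi ha
    have hCsub : ∀ i, C i ⊆ U \ D := fun i => hCU ▸ subset_biUnion_of_eq_empty_off hC0 i
    refine ⟨update C a D, fun i hi => ?_, fun i j hij => ?_, ?_, fun i hi => ?_⟩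
    · rw [mem_insert, not_or] at hi
      rw [update_of_ne hi.1, hC0 i hi.2]
    · rcases eq_or_ne i a with rfl | hia
      · rw [onFun, update_self, update_of_ne hij.symm]
        exact disjoint_sdiff_self_right.mono_right (hCsub j)
      rcases eq_or_ne j a with rfl | hja
      · rw [onFun, update_self, update_of_ne hij]
        exact disjoint_sdiff_self_left.mono_left (hCsub i)
      rw [onFun, update_of_ne hia, update_of_ne hja]
      exact hCdisj hij
    · rw [biUnion_insert, update_self, biUnion_congr rfl fun i hi => update_of_ne (hne i hi) _ _, hCU,
        union_sdiff_of_subset hDU]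
    · rcases mem_insert.mp hi with rfl | hi
      · rw [update_self, hD]
      · rw [update_of_ne (hne i hi), hC i hi]

theorem Finset.exists_partition_extending (I : Finset ι) (U : Finset α) (m : ι → ℕ)
    (A : ι → Finset α) (hA0 : ∀ i ∉ I, A i = ∅) (hA : Pairwise (Disjoint on A))
    (hAU : ∀ i ∈ I, A i ⊆ U) (hAm : ∀ i ∈ I, #(A i) ≤ m i) (hU : #U = ∑ i ∈ I, m i) :
    ∃ B : ι → Finset α, (∀ i ∉ I, B i = ∅) ∧ Pairwise (Disjoint on B) ∧ I.biUnion B = U ∧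
      ∀ i ∈ I, A i ⊆ B i ∧ #(B i) = m i := by
  set X := I.biUnion A
  have hXU : X ⊆ U := biUnion_subset.mpr hAU
  have hfree : #(U \ X) = ∑ i ∈ I, (m i - #(A i)) := by
    rw [card_sdiff_of_subset hXU, card_biUnion fun i _ j _ h => hA h, hU, sum_tsub_distrib _ hAm]
  obtain ⟨C, hC0, hCdisj, hCU, hC⟩ := exists_partition_of_card_eq_sum I (U \ X) _ hfree
  have hAC : ∀ i j, Disjoint (A i) (C j) := fun i j =>
    disjoint_sdiff_self_right.mono (subset_biUnion_of_eq_empty_off hA0 i)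
      (hCU ▸ subset_biUnion_of_eq_empty_off hC0 j)
  refine ⟨fun i => A i ∪ C i, fun i hi => by simp [hA0 i hi, hC0 i hi], fun i j hij => ?_, ?_,
    fun i hi => ⟨subset_union_left, ?_⟩⟩
  · exact disjoint_union_left.mpr ⟨disjoint_union_right.mpr ⟨hA hij, hAC i j⟩,
      disjoint_union_right.mpr ⟨(hAC j i).symm, hCdisj hij⟩⟩
  · rw [biUnion_union, hCU, union_sdiff_of_subset hXU]
  · rw [card_union_of_disjoint (hAC i i), hC i hi]
    have := hAm i hi
    omega

end Partition

def chainParent (F : Finset ℕ) (j : ℕ) : ℕ :=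
  if j ∈ F then Nat.findGreatest (· ∈ F) (j - 1) else j

section ChainParent

variable {F : Finset ℕ} {j : ℕ}

theorem chainParent_of_notMem (h : j ∉ F) : chainParent F j = j := if_neg h

theorem chainParent_of_mem (h : j ∈ F) : chainParent F j = Nat.findGreatest (· ∈ F) (j - 1) :=
  if_pos h

theorem chainParent_lt (hj : 1 ≤ j) (h : j ∈ F) : chainParent F j < j := by
  rw [chainParent_of_mem h]
  have := Nat.findGreatest_le (P := (· ∈ F)) (j - 1)
  omega

theorem chainParent_le : chainParent F j ≤ j := by
  by_cases h : j ∈ F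
  · rw [chainParent_of_mem h]
    exact (Nat.findGreatest_le _).trans (Nat.sub_le j 1)
  · rw [chainParent_of_notMem h]

theorem chainParent_mem_iff (h1 : 1 ∈ F) (hj : 2 ≤ j) : chainParent F j ∈ F ↔ j ∈ F := by
  by_cases h : j ∈ F
  · rw [chainParent_of_mem h]
    exact iff_of_true (Nat.findGreatest_spec (by omega) h1) h
  · rw [chainParent_of_notMem h]

theorem one_le_chainParent (h1 : 1 ∈ F) (hj : 2 ≤ j) : 1 ≤ chainParent F j := by
  by_cases h : j ∈ F
  · rw [chainParent_of_mem h]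
    exact Nat.le_findGreatest (by omega) h1
  · rw [chainParent_of_notMem h]
    omega

theorem chainParent_ne_of_lt (h1 : 1 ∈ F) {k : ℕ} (hj : 2 ≤ j) (hjk : j < k) :
    chainParent F j ≠ chainParent F k := by
  intro heq
  by_cases hkF : k ∈ F
  · have hjF : j ∈ F :=
      (chainParent_mem_iff h1 hj).mp (heq ▸ (chainParent_mem_iff h1 (by omega)).mpr hkF)
    have : j ≤ chainParent F k := by
      rw [chainParent_of_mem hkF]
      exact Nat.le_findGreatest (by omega) hjF
    have := chainParent_lt (by omega) hjF
    omega
  · have := chainParent_le (F := F) (j := j)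
    rw [chainParent_of_notMem hkF] at heq
    omega

theorem chainParent_injOn (h1 : 1 ∈ F) : Set.InjOn (chainParent F) {j | 2 ≤ j} := by
  intro j (hj : 2 ≤ j) k (hk : 2 ≤ k) heq
  rcases lt_trichotomy j k with h | h | h
  · exact absurd heq (chainParent_ne_of_lt h1 hj h)
  · exact h
  · exact absurd heq.symm (chainParent_ne_of_lt h1 hk h)

theorem chainParent_mem_Icc (h1 : 1 ∈ F) {r : ℕ} (hj : j ∈ Icc 2 r) : chainParent F j ∈ Icc 1 r := by
  rw [mem_Icc] at hj ⊢
  exact ⟨one_le_chainParent h1 hj.1, chainParent_le.trans hj.2⟩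

end ChainParent

def chainChildren (F : Finset ℕ) (r i : ℕ) : Finset ℕ := {j ∈ Icc 2 r | chainParent F j = i}

section ChainChildren

variable {F : Finset ℕ} {r : ℕ}

theorem mem_chainChildren_chainParent {j : ℕ} (hj : j ∈ Icc 2 r) :
    j ∈ chainChildren F r (chainParent F j) :=
  mem_filter.mpr ⟨hj, rfl⟩

theorem chainChildren_eq_empty (h1 : 1 ∈ F) {i : ℕ} (hi : i ∉ Icc 1 r) : chainChildren F r i = ∅ :=
  filter_eq_empty_iff.mpr fun _ hj heq => hi (heq ▸ chainParent_mem_Icc h1 hj)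

theorem pairwise_disjoint_chainChildren : Pairwise (Disjoint on chainChildren F r) :=
  Set.pairwise_univ.mp (Set.pairwiseDisjoint_filter (chainParent F) Set.univ (Icc 2 r))

theorem card_chainChildren_le_one (h1 : 1 ∈ F) (i : ℕ) : #(chainChildren F r i) ≤ 1 :=
  card_le_one.mpr fun _ hj _ hk => chainParent_injOn h1 (mem_Icc.mp (mem_filter.mp hj).1).1
    (mem_Icc.mp (mem_filter.mp hk).1).1 ((mem_filter.mp hj).2.trans (mem_filter.mp hk).2.symm)

end ChainChildren

theorem isReachSet_of_mem_iff_chainParent {r : ℕ} {F : Finset ℕ} {P : ℕ → Finset ℕ}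
    (hF : F ⊆ Icc 1 r) (h1 : 1 ∈ F) (hP : ∀ i, ∀ j ∈ Icc 2 r, j ∈ P i ↔ chainParent F j = i) :
    IsReachSet r P F := by
  refine ⟨h1, fun i hi j hj h2j hjr => ?_, fun F' h1' hF' f hf => ?_⟩
  · have hpar := (hP i j (mem_Icc.mpr ⟨h2j, hjr⟩)).mp hj
    exact (chainParent_mem_iff h1 h2j).mp (hpar ▸ hi)
  induction f using Nat.strong_induction_on with
  | _ f ih =>
    obtain ⟨hf1, hfr⟩ := mem_Icc.mp (hF hf)
    rcases eq_or_lt_of_le hf1 with rfl | hf2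
    · exact h1'
    have hpar := (chainParent_mem_iff h1 hf2).mpr hf
    exact hF' _ (ih _ (chainParent_lt hf1 hf) hpar) f
      ((hP _ f (mem_Icc.mpr ⟨hf2, hfr⟩)).mpr rfl) hf2 hfr

theorem reachSet_surjective_general
    (r : ℕ) (m : ℕ → ℕ) (hm : ∀ i ∈ Finset.Icc 1 r, 0 < m i)
    (s : ℕ) (hs : s = ∑ i ∈ Finset.Icc 1 r, m i) :
    ∀ F : Finset ℕ, F ⊆ Finset.Icc 1 r → 1 ∈ F →
      ∃ P : ℕ → Finset ℕ, IsOrderedPartition r s m P ∧ IsReachSet r P F := by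
  intro F hF h1
  have hrs : r ≤ s := calc
    r = ∑ _i ∈ Icc 1 r, 1 := by simp
    _ ≤ s := hs ▸ sum_le_sum fun i hi => hm i hi
  obtain ⟨P, hP0, hPdisj, hPU, hPm⟩ := exists_partition_extending (Icc 1 r) (Icc 1 s) m
    (chainChildren F r) (fun _ => chainChildren_eq_empty h1) pairwise_disjoint_chainChildren
    (fun _ _ => (filter_subset _ _).trans (Icc_subset_Icc one_le_two hrs))
    (fun i hi => (card_chainChildren_le_one h1 i).trans (hm i hi)) (by simp [hs])
  refine ⟨P, ⟨hP0, fun i j => @hPdisj i j, hPU, fun i hi => (hPm i hi).2⟩,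
    isReachSet_of_mem_iff_chainParent hF h1 fun i j hj => ?_⟩
  have hjP : j ∈ P (chainParent F j) :=
    (hPm _ (chainParent_mem_Icc h1 hj)).1 (mem_chainChildren_chainParent hj)
  exact ⟨fun hji => by_contra fun hne => disjoint_left.mp (hPdisj hne) hjP hji,
    by rintro rfl; exact hjP⟩

/-- **Surjectivity of `φ_r`.** For `r ≥ 1` and positive integers `m 1, …, m r`
with `s = m 1 + ⋯ + m r`, every subset `F ⊆ {1, …, r}` with `1 ∈ F` is the
reachable set of some ordered partition of `{1, …, s}` of type
`(m 1, …, m r)`. -/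
theorem reachSet_surjective
    (r : ℕ) (hr : 1 ≤ r) (m : ℕ → ℕ) (hm : ∀ i ∈ Finset.Icc 1 r, 0 < m i)
    (s : ℕ) (hs : s = ∑ i ∈ Finset.Icc 1 r, m i) :
    ∀ F : Finset ℕ, F ⊆ Finset.Icc 1 r → 1 ∈ F →
      ∃ P : ℕ → Finset ℕ, IsOrderedPartition r s m P ∧ IsReachSet r P F :=
  reachSet_surjective_general r m hm s hs
end
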